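/- arXiv:math/0402381 — 5 statements merged into one kernel-verified Lean document; each statement's English description precedes it below -/
import Mathlib

section
/- Let p(z) = Σ_{k=−n}^{n} c_k z^k be a trigonometric polynomial of degree at most n, viewed as a rational function on ℂ∖{0}. Then for every z ∈ ℂ∖{0}, |p(z)| ≤ ‖p‖_S · e^{n V(z)}, where V(z) = |log|z||. -/
open Complex

noncomputable section

private lemma maxmod_aux {F : ℂ → ℂ} {M : ℝ} (hF : Differentiable ℂ F)
    (hb : ∀ w ∈ Metric.sphere (0:ℂ) 1, ‖F w‖ ≤ M) {w : ℂ} (hw : ‖w‖ ≤ 1) :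
    ‖F w‖ ≤ M := by
  apply Complex.norm_le_of_forall_mem_frontier_norm_le (U := Metric.ball (0:ℂ) 1)
    Metric.isBounded_ball hF.diffContOnCl
  · intro x hx
    rw [frontier_ball (0:ℂ) one_ne_zero] at hx
    exact hb x hx
  · rw [closure_ball (0:ℂ) one_ne_zero]
    simpa [Metric.mem_closedBall, dist_zero_right] using hw

/-- **Bernstein–Walsh inequality on ℂ∖{0}.**
Let `p z = ∑_{k=-n}^n c_k z^k` be a trigonometric polynomial of degree at most `n`, viewed
as a rational function on `ℂ∖{0}`. Then for every `z ≠ 0`,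
`|p z| ≤ ‖p‖_S ⬝ exp (n * V z)` where `V z = |log |z||` and `‖p‖_S` is the sup norm of `p`
over the unit circle `S`. -/
theorem bernstein_walsh_trig_poly (n : ℕ) (c : ℤ → ℂ) (p : ℂ → ℂ)
    (hp : ∀ z : ℂ, z ≠ 0 → p z = ∑ k ∈ Finset.Icc (-(n:ℤ)) (n:ℤ), c k * z ^ k)
    (z : ℂ) (hz : z ≠ 0) :
    ‖p z‖ ≤ sSup ((fun w => ‖p w‖) '' Metric.sphere (0:ℂ) 1) *
      Real.exp (n * |Real.log ‖z‖|) := by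
  have hzn : (0:ℝ) < ‖z‖ := norm_pos_iff.mpr hz
  set S := Metric.sphere (0:ℂ) 1 with hS
  set M := sSup ((fun w => ‖p w‖) '' S) with hMdef
  have hSne : ∀ w ∈ S, w ≠ 0 := by
    intro w hw h0
    rw [hS, Metric.mem_sphere, h0] at hw
    simp at hw
  have hcongr : Set.EqOn (fun w => ‖p w‖)
      (fun w : ℂ => ‖∑ k ∈ Finset.Icc (-(n:ℤ)) (n:ℤ), c k * w ^ k‖) S := by
    intro w hw
    simp only
    rw [hp w (hSne w hw)]
  have hcont : ContinuousOn
      (fun w : ℂ => ‖∑ k ∈ Finset.Icc (-(n:ℤ)) (n:ℤ), c k * w ^ k‖) S := by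
    apply ContinuousOn.norm
    apply continuousOn_finset_sum
    intro k _ w hw
    exact (continuousAt_const.mul (continuousAt_zpow₀ w k (Or.inl (hSne w hw)))).continuousWithinAt
  have hbdd : BddAbove ((fun w => ‖p w‖) '' S) := by
    rw [Set.image_congr hcongr]
    exact ((isCompact_sphere (0:ℂ) 1).image_of_continuousOn hcont).bddAbove
  have hmem : ∀ w ∈ S, ‖p w‖ ≤ M := fun w hw => le_csSup hbdd ⟨w, hw, rfl⟩
  have h1S : (1:ℂ) ∈ S := by simp [hS]
  have hM0 : 0 ≤ M := le_trans (norm_nonneg _) (hmem 1 h1S)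
  rcases le_or_gt ‖z‖ 1 with hle | hgt
  · -- ‖z‖ ≤ 1 : use F w = w^n * p w
    set F : ℂ → ℂ := fun w => ∑ k ∈ Finset.Icc (-(n:ℤ)) (n:ℤ), c k * w ^ ((n:ℤ) + k).toNat
      with hF
    have hFdiff : Differentiable ℂ F :=
      Differentiable.fun_sum fun k _ => (differentiable_pow _).const_mul _
    have hFeq : ∀ w : ℂ, w ≠ 0 → F w = w ^ n * p w := by
      intro w hw0
      rw [hp w hw0, Finset.mul_sum, hF]
      refine Finset.sum_congr rfl fun k hk => ?_
      rw [Finset.mem_Icc] at hk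
      have hpow : w ^ ((n:ℤ) + k).toNat = w ^ n * w ^ k := by
        rw [← zpow_natCast w ((n:ℤ) + k).toNat,
          Int.toNat_of_nonneg (by linarith [hk.1]), zpow_add₀ hw0, zpow_natCast]
      rw [hpow]; ring
    have hFb : ∀ w ∈ S, ‖F w‖ ≤ M := by
      intro w hw
      have hw1 : ‖w‖ = 1 := by simpa [hS] using hw
      rw [hFeq w (hSne w hw), norm_mul, norm_pow, hw1, one_pow, one_mul]
      exact hmem w hw
    have hFz : ‖F z‖ ≤ M := maxmod_aux hFdiff hFb hle
    rw [hFeq z hz, norm_mul, norm_pow] at hFz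
    have hexp : Real.exp ((n:ℝ) * |Real.log ‖z‖|) = (‖z‖ ^ n)⁻¹ := by
      rw [abs_of_nonpos (Real.log_nonpos (le_of_lt hzn) hle), mul_neg, Real.exp_neg,
        Real.exp_nat_mul, Real.exp_log hzn]
    rw [hexp, ← div_eq_mul_inv, le_div_iff₀ (pow_pos hzn n)]
    calc ‖p z‖ * ‖z‖ ^ n = ‖z‖ ^ n * ‖p z‖ := by ring
      _ ≤ M := hFz
  · -- 1 < ‖z‖ : use G w = w^n * p w⁻¹
    set G : ℂ → ℂ := fun w => ∑ k ∈ Finset.Icc (-(n:ℤ)) (n:ℤ), c k * w ^ ((n:ℤ) - k).toNat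
      with hG
    have hGdiff : Differentiable ℂ G :=
      Differentiable.fun_sum fun k _ => (differentiable_pow _).const_mul _
    have hGeq : ∀ w : ℂ, w ≠ 0 → G w = w ^ n * p w⁻¹ := by
      intro w hw0
      rw [hp w⁻¹ (inv_ne_zero hw0), Finset.mul_sum, hG]
      refine Finset.sum_congr rfl fun k hk => ?_
      rw [Finset.mem_Icc] at hk
      have hpow : w ^ ((n:ℤ) - k).toNat = w ^ n * (w⁻¹) ^ k := by
        rw [inv_zpow, ← zpow_neg, ← zpow_natCast w ((n:ℤ) - k).toNat,
          Int.toNat_of_nonneg (by linarith [hk.2]), sub_eq_add_neg,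
          zpow_add₀ hw0, zpow_natCast]
      rw [hpow]; ring
    have hGb : ∀ w ∈ S, ‖G w‖ ≤ M := by
      intro w hw
      have hw1 : ‖w‖ = 1 := by simpa [hS] using hw
      have hwinv : w⁻¹ ∈ S := by simp [hS, norm_inv, hw1]
      rw [hGeq w (hSne w hw), norm_mul, norm_pow, hw1, one_pow, one_mul]
      exact hmem w⁻¹ hwinv
    have hzinv : ‖z⁻¹‖ ≤ 1 := by
      rw [norm_inv]
      exact inv_le_one_of_one_le₀ (le_of_lt hgt)
    have hGz : ‖G z⁻¹‖ ≤ M := maxmod_aux hGdiff hGb hzinv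
    rw [hGeq z⁻¹ (inv_ne_zero hz), inv_inv, norm_mul, norm_pow, norm_inv] at hGz
    have hexp : Real.exp ((n:ℝ) * |Real.log ‖z‖|) = ‖z‖ ^ n := by
      rw [_root_.abs_of_nonneg (Real.log_nonneg (le_of_lt hgt)), Real.exp_nat_mul,
        Real.exp_log hzn]
    rw [hexp]
    have hpz : ‖z‖⁻¹ ^ n * ‖p z‖ ≤ M := hGz
    have hpow : (0:ℝ) < ‖z‖ ^ n := pow_pos hzn n
    rw [inv_pow, inv_mul_le_iff₀ hpow] at hpz
    exact hpz.trans_eq (mul_comm _ _)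
end
end

section
/- Let h̃ : [0, ∞) → (0, ∞) be a positive, increasing, convex function, and define H̃(x) = min{ h̃(s) e^{−s} : 0 ≤ s ≤ x }. If there is a constant C > 0 such that H̃(x) ≤ C e^{−x/2} for all x ≥ 0, then ∫_0^∞ h̃(s) e^{−s} ds < ∞ (equivalently, with h(t) = h̃(log t), ∫_1^∞ h(t)/t² dt < ∞). -/
open Filter Set MeasureTheory

set_option maxHeartbeats 2000000

noncomputable section

/-- **Lemma calc.** Let `h̃ : [0,∞) → (0,∞)` be a positive, increasing,
convex function, and let `H̃ x = min { h̃(s) e^{-s} : 0 ≤ s ≤ x }`. If `H̃ x ≤ C e^{-x/2}`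
for all `x ≥ 0`, then `∫_0^∞ h̃(s) e^{-s} ds < ∞` (the integral of the nonnegative
integrand is expressed as a Lebesgue lower integral, so no measurability is assumed). -/
theorem integral_finite_of_trunc_min_decay (h : ℝ → ℝ) (C : ℝ) (hC : 0 < C)
    (hpos : ∀ x : ℝ, 0 ≤ x → 0 < h x)
    (hmono : MonotoneOn h (Set.Ici (0 : ℝ)))
    (hconv : ConvexOn ℝ (Set.Ici (0 : ℝ)) h)
    (hH : ∀ x : ℝ, 0 ≤ x →
      sInf ((fun s : ℝ => h s * Real.exp (-s)) '' Set.Icc 0 x) ≤ C * Real.exp (-x / 2)) :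
    ∫⁻ s in Set.Ici (0 : ℝ), ENNReal.ofReal (h s * Real.exp (-s)) < ⊤ := by
  have h0 : 0 < h 0 := hpos 0 le_rfl
  obtain ⟨β, hβ2, hβb⟩ : ∃ β : ℝ, 2 ≤ β ∧ Real.log (2 * C / h 0) ≤ β / 2 - 1 := by
    refine ⟨2 + 2 * max (Real.log (2 * C / h 0)) 0, ?_, ?_⟩
    · nlinarith [le_max_right (Real.log (2 * C / h 0)) (0:ℝ)]
    · nlinarith [le_max_left (Real.log (2 * C / h 0)) (0:ℝ)]
  have hβ0 : (0:ℝ) < β := by linarith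
  -- exponential facts
  have hexp1 : Real.exp (-1) ≤ 4/5 := by
    have h1 : (2:ℝ) ≤ Real.exp 1 := by nlinarith [Real.add_one_le_exp (1:ℝ)]
    have h2 : Real.exp (-1) * Real.exp 1 = 1 := by
      rw [← Real.exp_add]; norm_num
    nlinarith [Real.exp_pos (-(1:ℝ))]
  have hexphalf : Real.exp (-(1:ℝ)/2) ≤ 4/5 := by
    have h1 : (5/4:ℝ) ≤ Real.exp (1/2) := by nlinarith [Real.add_one_le_exp ((1:ℝ)/2)]
    have h2 : Real.exp (-(1:ℝ)/2) * Real.exp (1/2) = 1 := by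
      rw [← Real.exp_add]; norm_num
    nlinarith [Real.exp_pos (-(1:ℝ)/2)]
  have hexpq : Real.exp (-(1:ℝ)/4) ≤ 4/5 := by
    have h1 : (5/4:ℝ) ≤ Real.exp (1/4) := by nlinarith [Real.add_one_le_exp ((1:ℝ)/4)]
    have h2 : Real.exp (-(1:ℝ)/4) * Real.exp (1/4) = 1 := by
      rw [← Real.exp_add]; norm_num
    nlinarith [Real.exp_pos (-(1:ℝ)/4)]
  -- geometric sum bound
  have geomsum : ∀ r : ℝ, 0 ≤ r → r ≤ 4/5 → ∀ m : ℕ, (∑ i ∈ Finset.range m, r ^ i) ≤ 5 := by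
    intro r h0r h1r m
    have hr1 : r ≠ 1 := by intro hr; rw [hr] at h1r; norm_num at h1r
    rw [geom_sum_eq hr1]
    rw [div_le_iff_of_neg (by linarith : r - 1 < 0)]
    nlinarith [pow_nonneg h0r m]
  -- coverage
  obtain ⟨A, hA, cover⟩ : ∃ A : ℝ, 0 < A ∧ ∀ n : ℕ, ∃ k : ℕ, n + 1 ≤ k ∧
      (k : ℝ) ≤ 2 * n + β ∧ h k ≤ A * Real.exp ((k : ℝ) - n) := by
    refine ⟨2 * C * Real.exp (1 - β / 2), by positivity, ?_⟩
    intro n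
    have hn0 : (0:ℝ) ≤ (n:ℝ) := Nat.cast_nonneg n
    set x : ℝ := 2 * n + β with hxdef
    have hx0 : 0 ≤ x := by simp only [hxdef]; linarith
    have hne : ((fun s : ℝ => h s * Real.exp (-s)) '' Set.Icc 0 x).Nonempty :=
      ⟨h 0 * Real.exp (-0), ⟨0, ⟨le_rfl, hx0⟩, rfl⟩⟩
    have hbdd : BddBelow ((fun s : ℝ => h s * Real.exp (-s)) '' Set.Icc 0 x) := by
      refine ⟨0, ?_⟩
      rintro y ⟨s, hs, rfl⟩
      exact le_of_lt (mul_pos (hpos s hs.1) (Real.exp_pos _))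
    have hlt : sInf ((fun s : ℝ => h s * Real.exp (-s)) '' Set.Icc 0 x)
        < 2 * C * Real.exp (-x/2) := by
      refine lt_of_le_of_lt (hH x hx0) ?_
      have := Real.exp_pos (-x/2)
      have : C * Real.exp (-x / 2) < 2 * C * Real.exp (-x / 2) := by nlinarith
      linarith
    obtain ⟨y, ⟨p, hp, rfl⟩, hy⟩ := (csInf_lt_iff hbdd hne).mp hlt
    simp only at hy
    have hp0 : 0 ≤ p := hp.1
    have hh0p : h 0 ≤ h p := hmono (mem_Ici.2 le_rfl) (mem_Ici.2 hp0) hp0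
    have h1 : h 0 * Real.exp (-p) < 2 * C * Real.exp (-x/2) :=
      lt_of_le_of_lt (mul_le_mul_of_nonneg_right hh0p (Real.exp_pos _).le) hy
    -- p > n + 1
    have hplog : x/2 - p < Real.log (2 * C / h 0) := by
      have hlog := Real.log_lt_log (by positivity) h1
      rw [Real.log_mul (ne_of_gt h0) (ne_of_gt (Real.exp_pos _)), Real.log_exp,
        Real.log_mul (by positivity) (ne_of_gt (Real.exp_pos _)), Real.log_exp] at hlog
      rw [Real.log_div (by positivity) (ne_of_gt h0)]
      linarith
    have hpgt : (n:ℝ) + 1 ≤ p := by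
      have : x / 2 = (n:ℝ) + β / 2 := by rw [hxdef]; ring
      linarith
    refine ⟨⌊p⌋₊, ?_, ?_, ?_⟩
    · exact Nat.le_floor (by push_cast; linarith)
    · exact le_trans (Nat.floor_le hp0) hp.2
    · have hkp : (⌊p⌋₊ : ℝ) ≤ p := Nat.floor_le hp0
      have hk0 : (0:ℝ) ≤ (⌊p⌋₊ : ℝ) := Nat.cast_nonneg _
      have hmkp : h ⌊p⌋₊ ≤ h p := hmono (mem_Ici.2 hk0) (mem_Ici.2 hp0) hkp
      have hhp : h p < 2 * C * Real.exp (p - x/2) := by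
        have := mul_lt_mul_of_pos_right hy (Real.exp_pos p)
        have heq : h p * Real.exp (-p) * Real.exp p = h p := by
          rw [mul_assoc, ← Real.exp_add]; simp
        have heq2 : 2 * C * Real.exp (-x/2) * Real.exp p = 2 * C * Real.exp (p - x/2) := by
          rw [mul_assoc, ← Real.exp_add]; ring_nf
        rw [heq, heq2] at this
        exact this
      have hstep : 2 * C * Real.exp (p - x/2) ≤ 2 * C * Real.exp (1 - β/2) * Real.exp ((⌊p⌋₊:ℝ) - n) := by
        have hp1 : p < (⌊p⌋₊:ℝ) + 1 := Nat.lt_floor_add_one p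
        have : Real.exp (p - x/2) ≤ Real.exp ((1 - β/2) + ((⌊p⌋₊:ℝ) - n)) := by
          apply Real.exp_le_exp.2
          rw [hxdef]; push_cast; linarith
        rw [Real.exp_add] at this
        nlinarith [Real.exp_pos (p - x/2)]
      exact le_trans hmkp (le_trans hhp.le hstep)
  choose k hk1 hk2 hk3 using cover
  -- constants
  obtain ⟨A', hA'def⟩ : ∃ A' : ℝ, A' = A * Real.exp (β/2) := ⟨_, rfl⟩
  have hA' : 0 < A' := by rw [hA'def]; positivity
  have hAA' : A ≤ A' := by
    have : (1:ℝ) ≤ Real.exp (β/2) := Real.one_le_exp (by linarith)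
    nlinarith
  obtain ⟨K₁, hK₁def⟩ : ∃ K₁ : ℝ, K₁ = 80 * A' := ⟨_, rfl⟩
  obtain ⟨K₂, hK₂def⟩ : ∃ K₂ : ℝ, K₂ = 60 * A' * Real.exp (β/2) := ⟨_, rfl⟩
  have hK₁ : 0 < K₁ := by rw [hK₁def]; positivity
  have hK₂ : 0 < K₂ := by rw [hK₂def]; positivity
  -- good point value decay
  have gv : ∀ n : ℕ, h (k n) * Real.exp (-(k n:ℝ)) ≤ A' * Real.exp (-(k n:ℝ)/2) := by
    intro n
    have h1 : h (k n) * Real.exp (-(k n:ℝ)) ≤ A * Real.exp (-(n:ℝ)) := by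
      calc h (k n) * Real.exp (-(k n:ℝ))
          ≤ (A * Real.exp ((k n:ℝ) - n)) * Real.exp (-(k n:ℝ)) :=
            mul_le_mul_of_nonneg_right (hk3 n) (Real.exp_pos _).le
        _ = A * Real.exp (-(n:ℝ)) := by rw [mul_assoc, ← Real.exp_add]; ring_nf
    have h2 : Real.exp (-(n:ℝ)) ≤ Real.exp (β/2) * Real.exp (-(k n:ℝ)/2) := by
      rw [← Real.exp_add]
      apply Real.exp_le_exp.2
      have := hk2 n
      linarith
    calc h (k n) * Real.exp (-(k n:ℝ)) ≤ A * (Real.exp (β/2) * Real.exp (-(k n:ℝ)/2)) :=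
          le_trans h1 (mul_le_mul_of_nonneg_left h2 hA.le)
      _ = A' * Real.exp (-(k n:ℝ)/2) := by rw [hA'def]; ring
  -- potential function
  obtain ⟨F, hFdef⟩ : ∃ F : ℕ → ℝ, ∀ n : ℕ, F n =
      5 * (h n * Real.exp (-(n:ℝ))) + K₁ * Real.exp (-(n:ℝ)/4) + K₂ / ((n:ℝ)+1) :=
    ⟨_, fun _ => rfl⟩
  have hFnonneg : ∀ n : ℕ, 0 ≤ F n := by
    intro n
    have h1 : 0 < h n := hpos _ (Nat.cast_nonneg n)
    have e1 := Real.exp_pos (-(n:ℝ))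
    have e2 := Real.exp_pos (-(n:ℝ)/4)
    have h3 : (0:ℝ) < (n:ℝ) + 1 := by positivity
    have h4 : 0 < K₂ / ((n:ℝ)+1) := by positivity
    rw [hFdef]
    nlinarith
  -- partial sum bounds for exp
  have S1 : ∀ n N : ℕ, (∑ j ∈ Finset.Ico n N, Real.exp (-(j:ℝ))) ≤ 5 * Real.exp (-(n:ℝ)) := by
    intro n N
    rw [Finset.sum_Ico_eq_sum_range]
    have congr1 : ∀ i ∈ Finset.range (N - n),
        Real.exp (-((n + i : ℕ):ℝ)) = Real.exp (-(n:ℝ)) * (Real.exp (-1)) ^ i := by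
      intro i _
      rw [← Real.exp_nat_mul, ← Real.exp_add]
      push_cast; ring_nf
    rw [Finset.sum_congr rfl congr1, ← Finset.mul_sum]
    have := geomsum (Real.exp (-1)) (Real.exp_pos _).le hexp1 (N - n)
    calc Real.exp (-(n:ℝ)) * (∑ i ∈ Finset.range (N-n), (Real.exp (-1))^i)
        ≤ Real.exp (-(n:ℝ)) * 5 := mul_le_mul_of_nonneg_left this (Real.exp_pos _).le
      _ = 5 * Real.exp (-(n:ℝ)) := by ring
  have S2 : ∀ n N : ℕ, (∑ j ∈ Finset.Ico n N, ((j:ℝ) - n) * Real.exp (-(j:ℝ)))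
      ≤ 10 * Real.exp (-(n:ℝ)) := by
    intro n N
    rw [Finset.sum_Ico_eq_sum_range]
    have step : ∀ i ∈ Finset.range (N - n),
        (((n + i : ℕ):ℝ) - n) * Real.exp (-((n + i : ℕ):ℝ))
          ≤ Real.exp (-(n:ℝ)) * 2 * (Real.exp (-(1:ℝ)/2)) ^ i := by
      intro i _
      push_cast
      have e2 : (Real.exp (-(1:ℝ)/2)) ^ i = Real.exp (-(i:ℝ)/2) := by
        rw [← Real.exp_nat_mul]; ring_nf
      have e1 : Real.exp (-((n:ℝ) + i)) = Real.exp (-(n:ℝ)) * Real.exp (-(i:ℝ)) := by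
        rw [← Real.exp_add]; ring_nf
      have h4 : (i:ℝ) * Real.exp (-(i:ℝ)) ≤ 2 * Real.exp (-(i:ℝ)/2) := by
        have ha : (i:ℝ)/2 + 1 ≤ Real.exp ((i:ℝ)/2) := Real.add_one_le_exp _
        have hb : Real.exp ((i:ℝ)/2) * Real.exp (-(i:ℝ)/2) = 1 := by
          rw [← Real.exp_add, show (i:ℝ)/2 + -(i:ℝ)/2 = 0 by ring, Real.exp_zero]
        have hc : Real.exp (-(i:ℝ)) = Real.exp (-(i:ℝ)/2) * Real.exp (-(i:ℝ)/2) := by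
          rw [← Real.exp_add]; ring_nf
        rw [hc]
        have hp1 := Real.exp_pos (-(i:ℝ)/2)
        have hp2 := Real.exp_pos ((i:ℝ)/2)
        nlinarith [mul_le_mul_of_nonneg_right ha (mul_pos hp1 hp1).le]
      rw [e2, e1]
      have hp3 := Real.exp_pos (-(n:ℝ))
      calc ((n:ℝ) + i - n) * (Real.exp (-(n:ℝ)) * Real.exp (-(i:ℝ)))
          = Real.exp (-(n:ℝ)) * ((i:ℝ) * Real.exp (-(i:ℝ))) := by ring
        _ ≤ Real.exp (-(n:ℝ)) * (2 * Real.exp (-(i:ℝ)/2)) :=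
            mul_le_mul_of_nonneg_left h4 hp3.le
        _ = Real.exp (-(n:ℝ)) * 2 * Real.exp (-(i:ℝ)/2) := by ring
    calc (∑ i ∈ Finset.range (N - n), (((n + i : ℕ):ℝ) - n) * Real.exp (-((n + i : ℕ):ℝ)))
        ≤ ∑ i ∈ Finset.range (N - n), Real.exp (-(n:ℝ)) * 2 * (Real.exp (-(1:ℝ)/2)) ^ i :=
          Finset.sum_le_sum step
      _ = Real.exp (-(n:ℝ)) * 2 * (∑ i ∈ Finset.range (N - n), (Real.exp (-(1:ℝ)/2)) ^ i) := by
          rw [← Finset.mul_sum]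
      _ ≤ Real.exp (-(n:ℝ)) * 2 * 5 := by
          have := geomsum (Real.exp (-(1:ℝ)/2)) (Real.exp_pos _).le hexphalf (N - n)
          have hp3 := Real.exp_pos (-(n:ℝ))
          nlinarith
      _ = 10 * Real.exp (-(n:ℝ)) := by ring
  -- key induction
  have key : ∀ m n N : ℕ, N - n ≤ m →
      (∑ j ∈ Finset.Ico n N, h j * Real.exp (-(j:ℝ))) ≤ F n := by
    intro m
    induction m with
    | zero =>
      intro n N hm
      rw [Finset.Ico_eq_empty (by omega)]
      simpa using hFnonneg n
    | succ m ih =>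
      intro n N hm
      by_cases hNn : N ≤ n
      · rw [Finset.Ico_eq_empty (by omega)]
        simpa using hFnonneg n
      push_neg at hNn
      obtain ⟨κ, hkge, hkle, hkA, hgvκ⟩ : ∃ κ : ℕ, n + 1 ≤ κ ∧ (κ:ℝ) ≤ 2 * n + β ∧
          h κ ≤ A * Real.exp ((κ:ℝ) - n) ∧ h κ * Real.exp (-(κ:ℝ)) ≤ A' * Real.exp (-(κ:ℝ)/2) :=
        ⟨k n, hk1 n, hk2 n, hk3 n, gv n⟩
      have hn0 : (0:ℝ) ≤ (n:ℝ) := Nat.cast_nonneg n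
      have hκn : (n:ℝ) + 1 ≤ (κ:ℝ) := by exact_mod_cast hkge
      have hKpos : (0:ℝ) < (κ:ℝ) - n := by linarith
      have hK1 : (1:ℝ) ≤ (κ:ℝ) - n := by linarith
      have hhn : 0 < h n := hpos _ hn0
      have hhκ : 0 < h κ := hpos _ (Nat.cast_nonneg κ)
      -- chord bound
      have chord : ∀ j ∈ Finset.Ico n κ, h j * Real.exp (-(j:ℝ)) ≤
          (h n + h κ / ((κ:ℝ) - n) * ((j:ℝ) - n)) * Real.exp (-(j:ℝ)) := by
        intro j hj
        rw [Finset.mem_Ico] at hj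
        have hjn : (n:ℝ) ≤ (j:ℝ) := by exact_mod_cast hj.1
        have hjκ : (j:ℝ) ≤ (κ:ℝ) := by
          have : j ≤ κ := le_of_lt hj.2
          exact_mod_cast this
        have hhj : h j ≤ h n + h κ / ((κ:ℝ) - n) * ((j:ℝ) - n) := by
          have ha : 0 ≤ ((κ:ℝ) - j) / ((κ:ℝ) - n) := by
            apply div_nonneg _ hKpos.le; linarith
          have hb : 0 ≤ ((j:ℝ) - n) / ((κ:ℝ) - n) := by
            apply div_nonneg _ hKpos.le; linarith
          have hab : ((κ:ℝ) - j)/((κ:ℝ) - n) + ((j:ℝ) - n)/((κ:ℝ) - n) = 1 := by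
            field_simp
            ring
          have hcv := hconv.2 (mem_Ici.2 hn0) (mem_Ici.2 (Nat.cast_nonneg κ)) ha hb hab
          rw [smul_eq_mul, smul_eq_mul, smul_eq_mul] at hcv
          have hpt : ((κ:ℝ) - j)/((κ:ℝ) - n) * (n:ℝ) + ((j:ℝ) - n)/((κ:ℝ) - n) * (κ:ℝ)
              = (j:ℝ) := by
            field_simp
            ring
          rw [hpt] at hcv
          have han : ((κ:ℝ) - j)/((κ:ℝ) - n) ≤ 1 := by
            rw [div_le_one hKpos]; linarith
          calc h j ≤ ((κ:ℝ) - j)/((κ:ℝ) - n) * h n + ((j:ℝ) - n)/((κ:ℝ) - n) * h κ := hcv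
            _ ≤ 1 * h n + ((j:ℝ) - n)/((κ:ℝ) - n) * h κ := by
                have : ((κ:ℝ) - j)/((κ:ℝ) - n) * h n ≤ 1 * h n :=
                  mul_le_mul_of_nonneg_right han hhn.le
                linarith
            _ = h n + h κ / ((κ:ℝ) - n) * ((j:ℝ) - n) := by ring
        exact mul_le_mul_of_nonneg_right hhj (Real.exp_pos _).le
      -- split the sum
      have hsplit : (∑ j ∈ Finset.Ico n N, h j * Real.exp (-(j:ℝ))) ≤
          (∑ j ∈ Finset.Ico n κ, (h n + h κ / ((κ:ℝ) - n) * ((j:ℝ) - n)) * Real.exp (-(j:ℝ)))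
          + (∑ j ∈ Finset.Ico κ N, h j * Real.exp (-(j:ℝ))) := by
        have hnonneg : ∀ j ∈ Finset.Ico n κ,
            0 ≤ (h n + h κ / ((κ:ℝ) - n) * ((j:ℝ) - n)) * Real.exp (-(j:ℝ)) := by
          intro j hj
          rw [Finset.mem_Ico] at hj
          have hjn : (n:ℝ) ≤ (j:ℝ) := by exact_mod_cast hj.1
          have hq0 : 0 ≤ h κ / ((κ:ℝ) - n) := div_nonneg hhκ.le hKpos.le
          apply mul_nonneg _ (Real.exp_pos _).le
          nlinarith [mul_nonneg hq0 (sub_nonneg.2 hjn)]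
        rcases le_total N κ with hc | hc
        · have t1 : (∑ j ∈ Finset.Ico n N, h j * Real.exp (-(j:ℝ))) ≤
              ∑ j ∈ Finset.Ico n N, (h n + h κ / ((κ:ℝ) - n) * ((j:ℝ) - n)) * Real.exp (-(j:ℝ)) := by
            apply Finset.sum_le_sum
            intro j hj
            exact chord j (Finset.mem_of_subset (Finset.Ico_subset_Ico le_rfl hc) hj)
          have t2 : (∑ j ∈ Finset.Ico n N, (h n + h κ / ((κ:ℝ) - n) * ((j:ℝ) - n)) * Real.exp (-(j:ℝ)))
              ≤ ∑ j ∈ Finset.Ico n κ, (h n + h κ / ((κ:ℝ) - n) * ((j:ℝ) - n)) * Real.exp (-(j:ℝ)) :=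
            Finset.sum_le_sum_of_subset_of_nonneg (Finset.Ico_subset_Ico le_rfl hc)
              (fun j hj _ => hnonneg j hj)
          have t3 : 0 ≤ ∑ j ∈ Finset.Ico κ N, h j * Real.exp (-(j:ℝ)) := by
            apply Finset.sum_nonneg
            intro j hj
            rw [Finset.mem_Ico] at hj
            have : 0 < h j := hpos _ (Nat.cast_nonneg j)
            positivity
          linarith
        · rw [← Finset.sum_Ico_consecutive _ (by omega : n ≤ κ) hc]
          have t1 := Finset.sum_le_sum chord
          linarith
      -- bound the chord sum
      have csum : (∑ j ∈ Finset.Ico n κ, (h n + h κ / ((κ:ℝ) - n) * ((j:ℝ) - n)) * Real.exp (-(j:ℝ)))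
          ≤ 5 * (h n * Real.exp (-(n:ℝ))) + h κ / ((κ:ℝ) - n) * (10 * Real.exp (-(n:ℝ))) := by
        have expand : ∀ j ∈ Finset.Ico n κ,
            (h n + h κ / ((κ:ℝ) - n) * ((j:ℝ) - n)) * Real.exp (-(j:ℝ))
            = h n * Real.exp (-(j:ℝ)) + h κ / ((κ:ℝ) - n) * (((j:ℝ) - n) * Real.exp (-(j:ℝ))) := by
          intro j _; ring
        rw [Finset.sum_congr rfl expand, Finset.sum_add_distrib, ← Finset.mul_sum, ← Finset.mul_sum]
        have hq : 0 ≤ h κ / ((κ:ℝ) - n) := div_nonneg hhκ.le hKpos.le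
        have b1 : h n * (∑ j ∈ Finset.Ico n κ, Real.exp (-(j:ℝ))) ≤ h n * (5 * Real.exp (-(n:ℝ))) :=
          mul_le_mul_of_nonneg_left (S1 n κ) hhn.le
        have b2 : h κ / ((κ:ℝ) - n) * (∑ j ∈ Finset.Ico n κ, ((j:ℝ) - n) * Real.exp (-(j:ℝ)))
            ≤ h κ / ((κ:ℝ) - n) * (10 * Real.exp (-(n:ℝ))) :=
          mul_le_mul_of_nonneg_left (S2 n κ) hq
        have : h n * (5 * Real.exp (-(n:ℝ))) = 5 * (h n * Real.exp (-(n:ℝ))) := by ring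
        linarith
      -- induction hypothesis
      have hIH : (∑ j ∈ Finset.Ico κ N, h j * Real.exp (-(j:ℝ))) ≤ F κ := ih κ N (by omega)
      -- tail estimate
      have tail : h κ / ((κ:ℝ) - n) * (10 * Real.exp (-(n:ℝ))) + F κ
          ≤ K₁ * Real.exp (-(n:ℝ)/4) + K₂ / ((n:ℝ)+1) := by
        have hgv : h κ * Real.exp (-(κ:ℝ)) ≤ A' * Real.exp (-(κ:ℝ)/2) := hgvκ
        have hFκ : F κ = 5 * (h κ * Real.exp (-(κ:ℝ))) + K₁ * Real.exp (-(κ:ℝ)/4)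
            + K₂ / ((κ:ℝ)+1) := hFdef κ
        have hexpk2 : Real.exp (-(κ:ℝ)/2) ≤ Real.exp (-(κ:ℝ)/4) := by
          apply Real.exp_le_exp.2
          have : (0:ℝ) ≤ (κ:ℝ) := Nat.cast_nonneg κ
          linarith
        have hexpk4 : Real.exp (-(κ:ℝ)/4) ≤ 4/5 * Real.exp (-(n:ℝ)/4) := by
          calc Real.exp (-(κ:ℝ)/4) ≤ Real.exp (-((n:ℝ)+1)/4) := by
                apply Real.exp_le_exp.2; linarith
            _ = Real.exp (-(1:ℝ)/4) * Real.exp (-(n:ℝ)/4) := by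
                rw [← Real.exp_add]; ring_nf
            _ ≤ 4/5 * Real.exp (-(n:ℝ)/4) :=
                mul_le_mul_of_nonneg_right hexpq (Real.exp_pos _).le
        -- common: F κ's first two terms
        have hcommon : 5 * (h κ * Real.exp (-(κ:ℝ))) + K₁ * Real.exp (-(κ:ℝ)/4)
            ≤ (5 * A' + K₁) * (4/5) * Real.exp (-(n:ℝ)/4) := by
          have c1 : 5 * (h κ * Real.exp (-(κ:ℝ))) ≤ 5 * A' * Real.exp (-(κ:ℝ)/4) := by
            nlinarith [hgv, hexpk2, Real.exp_pos (-(κ:ℝ)/2)]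
          have c2 : (5 * A' + K₁) * Real.exp (-(κ:ℝ)/4)
              ≤ (5 * A' + K₁) * (4/5 * Real.exp (-(n:ℝ)/4)) := by
            apply mul_le_mul_of_nonneg_left hexpk4
            positivity
          nlinarith [Real.exp_pos (-(κ:ℝ)/4)]
        -- the main term
        have hmain : h κ / ((κ:ℝ) - n) * (10 * Real.exp (-(n:ℝ)))
            ≤ 10 * A * (Real.exp ((κ:ℝ) - n - n) / ((κ:ℝ) - n)) := by
          have d1 : h κ / ((κ:ℝ) - n) ≤ A * Real.exp ((κ:ℝ) - n) / ((κ:ℝ) - n) := by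
            exact div_le_div_of_nonneg_right hkA hKpos.le
          have d2 : A * Real.exp ((κ:ℝ) - n) / ((κ:ℝ) - n) * Real.exp (-(n:ℝ))
              = A * (Real.exp ((κ:ℝ) - n - n) / ((κ:ℝ) - n)) := by
            rw [div_mul_eq_mul_div, mul_assoc, ← Real.exp_add]
            ring_nf
          have := Real.exp_pos (-(n:ℝ))
          calc h κ / ((κ:ℝ) - n) * (10 * Real.exp (-(n:ℝ)))
              = 10 * (h κ / ((κ:ℝ) - n) * Real.exp (-(n:ℝ))) := by ring
            _ ≤ 10 * (A * Real.exp ((κ:ℝ) - n) / ((κ:ℝ) - n) * Real.exp (-(n:ℝ))) := by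
                nlinarith [mul_le_mul_of_nonneg_right d1 (Real.exp_pos (-(n:ℝ))).le]
            _ = 10 * A * (Real.exp ((κ:ℝ) - n - n) / ((κ:ℝ) - n)) := by rw [d2]; ring
        by_cases hcase : 2 * κ ≤ 3 * n
        · -- case A : κ - n ≤ n/2
          have hcaseR : 2 * ((κ:ℝ) - n) ≤ (n:ℝ) := by
            have : (2 * κ : ℝ) ≤ 3 * n := by exact_mod_cast hcase
            push_cast at this ⊢
            linarith
          have e1 : Real.exp ((κ:ℝ) - n - n) ≤ Real.exp (-(n:ℝ)/4) := by
            apply Real.exp_le_exp.2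
            linarith
          have e2 : Real.exp ((κ:ℝ) - n - n) / ((κ:ℝ) - n) ≤ Real.exp (-(n:ℝ)/4) := by
            calc Real.exp ((κ:ℝ) - n - n) / ((κ:ℝ) - n) ≤ Real.exp ((κ:ℝ) - n - n) / 1 := by
                  apply div_le_div_of_nonneg_left (Real.exp_pos _).le (by norm_num) hK1
              _ = Real.exp ((κ:ℝ) - n - n) := by ring
              _ ≤ Real.exp (-(n:ℝ)/4) := e1
          have hmain2 : h κ / ((κ:ℝ) - n) * (10 * Real.exp (-(n:ℝ)))
              ≤ 10 * A' * Real.exp (-(n:ℝ)/4) := by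
            calc h κ / ((κ:ℝ) - n) * (10 * Real.exp (-(n:ℝ)))
                ≤ 10 * A * (Real.exp ((κ:ℝ) - n - n) / ((κ:ℝ) - n)) := hmain
              _ ≤ 10 * A * Real.exp (-(n:ℝ)/4) := by nlinarith
              _ ≤ 10 * A' * Real.exp (-(n:ℝ)/4) := by nlinarith [Real.exp_pos (-(n:ℝ)/4)]
          have hK2mono : K₂ / ((κ:ℝ)+1) ≤ K₂ / ((n:ℝ)+1) := by
            apply div_le_div_of_nonneg_left hK₂.le (by positivity)
            linarith
          have harith : 10 * A' + (5 * A' + K₁) * (4/5) ≤ K₁ := by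
            rw [hK₁def]; nlinarith
          have harith2 : (10 * A' + (5 * A' + K₁) * (4/5)) * Real.exp (-(n:ℝ)/4)
              ≤ K₁ * Real.exp (-(n:ℝ)/4) :=
            mul_le_mul_of_nonneg_right harith (Real.exp_pos _).le
          rw [hFκ]
          nlinarith [hcommon, hmain2, hK2mono, harith2, Real.exp_pos (-(n:ℝ)/4)]
        · -- case B : κ - n > n/2
          push_neg at hcase
          have hcaseR : (n:ℝ) + 1 ≤ 2 * ((κ:ℝ) - n) := by
            have : (3 * n + 1 : ℝ) ≤ 2 * κ := by exact_mod_cast hcase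
            push_cast at this ⊢
            linarith
          have e1 : Real.exp ((κ:ℝ) - n - n) ≤ Real.exp β := by
            apply Real.exp_le_exp.2
            linarith
          have e2 : Real.exp ((κ:ℝ) - n - n) / ((κ:ℝ) - n) ≤ Real.exp β * (2 / ((n:ℝ)+1)) := by
            calc Real.exp ((κ:ℝ) - n - n) / ((κ:ℝ) - n) ≤ Real.exp β / ((κ:ℝ) - n) := by
                  exact div_le_div_of_nonneg_right e1 hKpos.le
              _ ≤ Real.exp β * (2 / ((n:ℝ)+1)) := by
                  rw [div_le_iff₀ hKpos]
                  have hn1 : (0:ℝ) < (n:ℝ) + 1 := by positivity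
                  rw [mul_comm (Real.exp β) (2 / ((n:ℝ)+1)), mul_assoc]
                  have : (1:ℝ) ≤ 2 / ((n:ℝ)+1) * ((κ:ℝ) - n) := by
                    rw [div_mul_eq_mul_div, le_div_iff₀ hn1]
                    linarith
                  nlinarith [Real.exp_pos β]
          have hmain2 : h κ / ((κ:ℝ) - n) * (10 * Real.exp (-(n:ℝ)))
              ≤ 20 * A * Real.exp β / ((n:ℝ)+1) := by
            have hn1 : (0:ℝ) < (n:ℝ) + 1 := by positivity
            calc h κ / ((κ:ℝ) - n) * (10 * Real.exp (-(n:ℝ)))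
                ≤ 10 * A * (Real.exp ((κ:ℝ) - n - n) / ((κ:ℝ) - n)) := hmain
              _ ≤ 10 * A * (Real.exp β * (2 / ((n:ℝ)+1))) := by nlinarith
              _ = 20 * A * Real.exp β / ((n:ℝ)+1) := by ring
          have hK2eq : 20 * A * Real.exp β / ((n:ℝ)+1) = K₂ / 3 / ((n:ℝ)+1) := by
            rw [hK₂def, hA'def]
            have : Real.exp β = Real.exp (β/2) * Real.exp (β/2) := by
              rw [← Real.exp_add]; ring_nf
            rw [this]; ring
          have hK2mono : K₂ / ((κ:ℝ)+1) ≤ 2/3 * (K₂ / ((n:ℝ)+1)) := by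
            calc K₂ / ((κ:ℝ)+1) ≤ K₂ / (3/2 * ((n:ℝ)+1)) :=
                  div_le_div_of_nonneg_left hK₂.le (by positivity) (by linarith)
              _ = 2/3 * (K₂ / ((n:ℝ)+1)) := by
                  field_simp
          have harith : (5 * A' + K₁) * (4/5) ≤ K₁ := by
            rw [hK₁def]; nlinarith
          have harith2 : (5 * A' + K₁) * (4/5) * Real.exp (-(n:ℝ)/4) ≤ K₁ * Real.exp (-(n:ℝ)/4) :=
            mul_le_mul_of_nonneg_right harith (Real.exp_pos _).le
          have hsplitK2 : 20 * A * Real.exp β / ((n:ℝ)+1) = 1/3 * (K₂ / ((n:ℝ)+1)) := by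
            rw [hK2eq]; ring
          rw [hFκ]
          linarith
      -- combine
      have hFn : F n = 5 * (h n * Real.exp (-(n:ℝ))) + K₁ * Real.exp (-(n:ℝ)/4)
          + K₂ / ((n:ℝ)+1) := hFdef n
      have hcomb : (∑ j ∈ Finset.Ico n N, h j * Real.exp (-(j:ℝ))) ≤
          5 * (h n * Real.exp (-(n:ℝ))) + (h κ / ((κ:ℝ) - n) * (10 * Real.exp (-(n:ℝ))) + F κ) := by
        linarith
      rw [hFn]
      linarith
  -- uniform bound on partial sums of h (n+1) * exp (-n)
  have upos : ∀ n : ℕ, 0 ≤ h ((n:ℝ)+1) * Real.exp (-(n:ℝ)) := by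
    intro n
    have : 0 < h ((n:ℝ)+1) := hpos _ (by positivity)
    positivity
  have bound : ∀ N : ℕ, (∑ j ∈ Finset.range N, h ((j:ℝ)+1) * Real.exp (-(j:ℝ)))
      ≤ Real.exp 1 * F 0 := by
    intro N
    have e1 : ∀ j : ℕ, h ((j:ℝ)+1) * Real.exp (-(j:ℝ))
        = Real.exp 1 * (h (((j+1 : ℕ)):ℝ) * Real.exp (-((j+1 : ℕ):ℝ))) := by
      intro j
      have : Real.exp 1 * Real.exp (-(((j:ℝ))+1)) = Real.exp (-(j:ℝ)) := by
        rw [← Real.exp_add]; ring_nf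
      push_cast
      rw [← this]; ring
    have e2 : (∑ j ∈ Finset.range N, h ((j:ℝ)+1) * Real.exp (-(j:ℝ)))
        = Real.exp 1 * (∑ j ∈ Finset.range N, h (((j+1:ℕ)):ℝ) * Real.exp (-((j+1:ℕ):ℝ))) := by
      rw [Finset.mul_sum]
      exact Finset.sum_congr rfl fun j _ => e1 j
    have e3 : (∑ j ∈ Finset.range N, h (((j+1:ℕ)):ℝ) * Real.exp (-((j+1:ℕ):ℝ)))
        ≤ ∑ j ∈ Finset.range (N+1), h (j:ℝ) * Real.exp (-(j:ℝ)) := by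
      rw [Finset.sum_range_succ']
      have : 0 < h ((0:ℕ):ℝ) := hpos _ (by norm_num)
      have h00 : 0 ≤ h ((0:ℕ):ℝ) * Real.exp (-((0:ℕ):ℝ)) := by positivity
      exact le_add_of_nonneg_right h00
    have e4 : (∑ j ∈ Finset.range (N+1), h (j:ℝ) * Real.exp (-(j:ℝ))) ≤ F 0 := by
      rw [Finset.range_eq_Ico]
      exact key (N+1) 0 (N+1) (by omega)
    calc (∑ j ∈ Finset.range N, h ((j:ℝ)+1) * Real.exp (-(j:ℝ)))
        = Real.exp 1 * (∑ j ∈ Finset.range N, h (((j+1:ℕ)):ℝ) * Real.exp (-((j+1:ℕ):ℝ))) := e2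
      _ ≤ Real.exp 1 * F 0 := by
          apply mul_le_mul_of_nonneg_left (le_trans e3 e4) (Real.exp_pos 1).le
  -- pass to the lintegral
  have hsub : Set.Ici (0:ℝ) ⊆ ⋃ n : ℕ, Set.Ico (n:ℝ) ((n:ℝ)+1) := by
    intro s hs
    exact Set.mem_iUnion.2 ⟨⌊s⌋₊, Nat.floor_le hs, Nat.lt_floor_add_one s⟩
  have step1 : (∫⁻ s in Set.Ici (0:ℝ), ENNReal.ofReal (h s * Real.exp (-s)))
      ≤ ∑' n : ℕ, ∫⁻ s in Set.Ico (n:ℝ) ((n:ℝ)+1), ENNReal.ofReal (h s * Real.exp (-s)) :=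
    le_trans (lintegral_mono_set hsub) (lintegral_iUnion_le _ _)
  have step2 : ∀ n : ℕ, (∫⁻ s in Set.Ico (n:ℝ) ((n:ℝ)+1), ENNReal.ofReal (h s * Real.exp (-s)))
      ≤ ENNReal.ofReal (h ((n:ℝ)+1) * Real.exp (-(n:ℝ))) := by
    intro n
    have hb : ∀ s ∈ Set.Ico (n:ℝ) ((n:ℝ)+1), ENNReal.ofReal (h s * Real.exp (-s))
        ≤ ENNReal.ofReal (h ((n:ℝ)+1) * Real.exp (-(n:ℝ))) := by
      intro s hs
      apply ENNReal.ofReal_le_ofReal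
      have hs0 : (0:ℝ) ≤ s := le_trans (Nat.cast_nonneg n) hs.1
      have h1 : h s ≤ h ((n:ℝ)+1) :=
        hmono (mem_Ici.2 hs0) (mem_Ici.2 (by positivity)) hs.2.le
      have h2 : Real.exp (-s) ≤ Real.exp (-(n:ℝ)) := Real.exp_le_exp.2 (by linarith [hs.1])
      have := hpos s hs0
      nlinarith [Real.exp_pos (-s)]
    calc (∫⁻ s in Set.Ico (n:ℝ) ((n:ℝ)+1), ENNReal.ofReal (h s * Real.exp (-s)))
        ≤ ∫⁻ _ in Set.Ico (n:ℝ) ((n:ℝ)+1),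
            ENNReal.ofReal (h ((n:ℝ)+1) * Real.exp (-(n:ℝ))) :=
          setLIntegral_mono measurable_const hb
      _ = ENNReal.ofReal (h ((n:ℝ)+1) * Real.exp (-(n:ℝ))) := by
          rw [setLIntegral_const, Real.volume_Ico]
          simp
  have step3 : (∑' n : ℕ, ENNReal.ofReal (h ((n:ℝ)+1) * Real.exp (-(n:ℝ))))
      ≤ ENNReal.ofReal (Real.exp 1 * F 0) := by
    rw [ENNReal.tsum_eq_iSup_sum]
    apply iSup_le
    intro s
    have hsub2 : s ⊆ Finset.range (s.sup id + 1) := by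
      intro i hi
      rw [Finset.mem_range]
      exact Nat.lt_succ_of_le (Finset.le_sup (f := id) hi)
    calc (∑ i ∈ s, ENNReal.ofReal (h ((i:ℝ)+1) * Real.exp (-(i:ℝ))))
        ≤ ∑ i ∈ Finset.range (s.sup id + 1), ENNReal.ofReal (h ((i:ℝ)+1) * Real.exp (-(i:ℝ))) :=
          Finset.sum_le_sum_of_subset hsub2
      _ = ENNReal.ofReal (∑ i ∈ Finset.range (s.sup id + 1), h ((i:ℝ)+1) * Real.exp (-(i:ℝ))) :=
          (ENNReal.ofReal_sum_of_nonneg fun i _ => upos i).symm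
      _ ≤ ENNReal.ofReal (Real.exp 1 * F 0) :=
          ENNReal.ofReal_le_ofReal (bound _)
  calc (∫⁻ s in Set.Ici (0:ℝ), ENNReal.ofReal (h s * Real.exp (-s)))
      ≤ ∑' n : ℕ, ∫⁻ s in Set.Ico (n:ℝ) ((n:ℝ)+1), ENNReal.ofReal (h s * Real.exp (-s)) := step1
    _ ≤ ∑' n : ℕ, ENNReal.ofReal (h ((n:ℝ)+1) * Real.exp (-(n:ℝ))) :=
        ENNReal.tsum_le_tsum step2
    _ ≤ ENNReal.ofReal (Real.exp 1 * F 0) := step3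
    _ < ⊤ := ENNReal.ofReal_lt_top
end
end

section
/- Fix r and a with r > a > 1, put β = π²/log r, and for k ∈ ℤ set z'_k = (1 − e^{kβ})/(1 + e^{kβ}) ∈ (−1, 1). Then for every x ∈ [0, (1 − e^{−β})/(1 + e^{−β})], the sum Σ_{k∈ℤ} log|(x − z'_k)/(1 − z'_k x)| (a sum of nonpositive extended-real terms) satisfies Σ_{k∈ℤ} log|(x − z'_k)/(1 − z'_k x)| ≤ −(e^{−π²/log a}/π²) · log r. -/
open Filter Set
open scoped ENNReal

noncomputable section

/-- `-log |(x - z)/(1 - z x)|`, the negative of a Green-function summand for the unit disk,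
as an extended nonnegative real: it is `∞` when `x = z` (the pole) and
`ENNReal.ofReal (-log |(x - z)/(1 - z x)|)` otherwise. Thus the inequality
`∑ log |(x - z'_k)/(1 - z'_k x)| ≤ -c` (a sum of nonpositive extended reals) is faithfully
expressed as `c ≤ ∑ blaschkeTerm x (z'_k)` in `[0, ∞]`. -/
def blaschkeTerm (x z : ℝ) : ℝ≥0∞ :=
  if x = z then ⊤ else ENNReal.ofReal (-Real.log |(x - z) / (1 - z * x)|)

/-- Fix `r > a > 1`, put `β = π²/log r`, and for `k ∈ ℤ` set
`z'_k = (1 - e^{kβ})/(1 + e^{kβ}) ∈ (-1, 1)`. Then for every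
`x ∈ [0, (1 - e^{-β})/(1 + e^{-β})]`,
`∑_{k ∈ ℤ} log |(x - z'_k)/(1 - z'_k x)| ≤ -(e^{-π²/log a}/π²) log r`. -/
theorem green_sum_estimate (r a : ℝ) (ha : 1 < a) (har : a < r)
    (β : ℝ) (hβ : β = Real.pi ^ 2 / Real.log r)
    (z' : ℤ → ℝ)
    (hz' : ∀ k : ℤ, z' k = (1 - Real.exp (k * β)) / (1 + Real.exp (k * β)))
    (x : ℝ) (hx0 : 0 ≤ x)
    (hx1 : x ≤ (1 - Real.exp (-β)) / (1 + Real.exp (-β))) :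
    ENNReal.ofReal (Real.exp (-(Real.pi ^ 2) / Real.log a) / Real.pi ^ 2 * Real.log r) ≤
      ∑' k : ℤ, blaschkeTerm x (z' k) := by
  have hπ : (0:ℝ) < Real.pi ^ 2 := by positivity
  have hla : 0 < Real.log a := Real.log_pos ha
  have hlr : 0 < Real.log r := Real.log_pos (ha.trans har)
  have hlar : Real.log a ≤ Real.log r := Real.log_le_log (by linarith) har.le
  have hβ0 : 0 < β := hβ ▸ div_pos hπ hlr
  have hβle : β ≤ Real.pi ^ 2 / Real.log a := by
    rw [hβ]; exact div_le_div_of_nonneg_left hπ.le hla hlar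
  -- the constant, rewritten
  have hconst : Real.exp (-(Real.pi ^ 2) / Real.log a) / Real.pi ^ 2 * Real.log r
      = Real.exp (-(Real.pi ^ 2) / Real.log a) / β := by
    rw [hβ]; field_simp
  set E0 : ℝ := Real.exp (-β) with hE0
  have hE0pos : 0 < E0 := Real.exp_pos _
  have hE0lt : E0 < 1 := Real.exp_lt_one_iff.mpr (by linarith)
  -- constant ≤ E0 / (1 - E0)
  have hcle : Real.exp (-(Real.pi ^ 2) / Real.log a) / β ≤ E0 / (1 - E0) := by
    have h1 : Real.exp (-(Real.pi ^ 2) / Real.log a) ≤ E0 := by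
      apply Real.exp_le_exp.mpr
      rw [neg_div]
      linarith
    have h2 : 1 - E0 ≤ β := by
      have := Real.add_one_le_exp (-β)
      simp only [hE0]; linarith
    have h3 : 0 < 1 - E0 := by linarith
    calc Real.exp (-(Real.pi ^ 2) / Real.log a) / β ≤ E0 / β :=
          div_le_div_of_nonneg_right h1 hβ0.le
      _ ≤ E0 / (1 - E0) := div_le_div_of_nonneg_left hE0pos.le h3 h2
  -- per-term lower bound
  by_cases hcase : x = z' (-1)
  · calc ENNReal.ofReal (Real.exp (-Real.pi ^ 2 / Real.log a) / Real.pi ^ 2 * Real.log r)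
        ≤ (⊤ : ℝ≥0∞) := le_top
      _ = blaschkeTerm x (z' (-1)) := by simp [blaschkeTerm, hcase]
      _ ≤ ∑' k : ℤ, blaschkeTerm x (z' k) := ENNReal.le_tsum (-1)
  · have hxt0ne : x ≠ (1 - E0) / (1 + E0) := by
      rw [hz' (-1)] at hcase
      simpa [hE0] using hcase
    have key : ∀ n : ℕ, ENNReal.ofReal (E0 ^ (n + 1)) ≤ blaschkeTerm x (z' (-(n + 1))) := by
      intro n
      set E : ℝ := E0 ^ (n + 1) with hE
      have hzeq : z' (-(n + 1)) = (1 - E) / (1 + E) := by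
        rw [hz']
        have hc : (((-(n + 1) : ℤ)) : ℝ) * β = ((n + 1 : ℕ) : ℝ) * (-β) := by push_cast; ring
        rw [hc, Real.exp_nat_mul, ← hE0, ← hE]
      have hEpos : 0 < E := pow_pos hE0pos _
      have hElt : E < 1 := pow_lt_one₀ hE0pos.le hE0lt (by omega)
      have hEle : E ≤ E0 := by
        calc E = E0 ^ (n + 1) := hE
          _ ≤ E0 ^ 1 := pow_le_pow_of_le_one hE0pos.le hE0lt.le (by omega)
          _ = E0 := pow_one E0
      clear_value E
      set t : ℝ := (1 - E) / (1 + E) with ht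
      have h1E : 0 < 1 + E := by linarith
      have htE : t * (1 + E) = 1 - E := by rw [ht]; field_simp
      have ht0 : 0 < t := div_pos (by linarith) h1E
      have ht1 : t < 1 := by nlinarith
      have ht0t : (1 - E0) / (1 + E0) ≤ t := by
        rw [ht, div_le_div_iff₀ (by linarith) h1E]
        nlinarith
      clear_value t
      have hxle : x ≤ t := hx1.trans ht0t
      have hxne : x ≠ t := by
        intro hxeq
        apply hxt0ne
        have h1 : t ≤ (1 - E0) / (1 + E0) := hxeq ▸ hx1
        have h2 : t = (1 - E0) / (1 + E0) := le_antisymm h1 ht0t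
        rw [hxeq, h2]
      have hxlt : x < t := lt_of_le_of_ne hxle hxne
      have hx1' : x < 1 := hxlt.trans ht1
      have htx1 : t * x ≤ t := mul_le_of_le_one_right ht0.le hx1'.le
      have h1tx : 0 < 1 - t * x := by linarith
      have hd0 : 0 < (t - x) / (1 - t * x) := div_pos (by linarith) h1tx
      have habs : |(x - t) / (1 - t * x)| = (t - x) / (1 - t * x) := by
        rw [abs_div, abs_of_pos h1tx, abs_of_neg (by linarith : x - t < 0)]
        ring
      have ht1E : t ≤ 1 - E := by nlinarith
      have hdle : (t - x) / (1 - t * x) ≤ 1 - E := by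
        rw [div_le_iff₀ h1tx]
        nlinarith [mul_nonneg hx0 hEpos.le, mul_nonneg (mul_nonneg ht0.le ht0.le) hx0,
          mul_nonneg (mul_nonneg hEpos.le ht0.le) hx0]
      have hlog : E ≤ -Real.log ((t - x) / (1 - t * x)) := by
        have h1 : Real.log ((t - x) / (1 - t * x)) ≤ Real.log (1 - E) :=
          Real.log_le_log hd0 hdle
        have h2 : Real.log (1 - E) ≤ -E := by
          rw [Real.log_le_iff_le_exp (by linarith)]
          linarith [Real.add_one_le_exp (-E)]
        linarith
      rw [hzeq, blaschkeTerm, if_neg hxne, habs]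
      exact ENNReal.ofReal_le_ofReal hlog
    have hsummable : Summable (fun n : ℕ => E0 ^ (n + 1)) := by
      have := (summable_geometric_of_lt_one hE0pos.le hE0lt).mul_left E0
      apply this.congr
      intro n; ring
    have hsum : ∑' n : ℕ, E0 ^ (n + 1) = E0 / (1 - E0) := by
      calc ∑' n : ℕ, E0 ^ (n + 1) = ∑' n : ℕ, E0 * E0 ^ n := tsum_congr fun n => by ring
        _ = E0 * (1 - E0)⁻¹ := by
            rw [tsum_mul_left, tsum_geometric_of_lt_one hE0pos.le hE0lt]
        _ = E0 / (1 - E0) := (div_eq_mul_inv _ _).symm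
    have hinj : Function.Injective (fun n : ℕ => (-(n + 1) : ℤ)) := by
      intro m n h
      simp only at h
      omega
    calc ENNReal.ofReal (Real.exp (-Real.pi ^ 2 / Real.log a) / Real.pi ^ 2 * Real.log r)
        = ENNReal.ofReal (Real.exp (-Real.pi ^ 2 / Real.log a) / β) := by rw [hconst]
      _ ≤ ENNReal.ofReal (E0 / (1 - E0)) := ENNReal.ofReal_le_ofReal hcle
      _ = ENNReal.ofReal (∑' n : ℕ, E0 ^ (n + 1)) := by rw [hsum]
      _ = ∑' n : ℕ, ENNReal.ofReal (E0 ^ (n + 1)) :=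
          ENNReal.ofReal_tsum_of_nonneg (fun n => by positivity) hsummable
      _ ≤ ∑' n : ℕ, blaschkeTerm x (z' (-(n + 1))) := ENNReal.tsum_le_tsum key
      _ ≤ ∑' k : ℤ, blaschkeTerm x (z' k) :=
          ENNReal.tsum_comp_le_tsum_of_injective hinj fun k => blaschkeTerm x (z' k)
end
end

section
/- Let h : [1, ∞) → (0, ∞) be a function such that s ↦ h(e^s) is increasing and convex on [0, ∞). If ∫_1^∞ h(t)/(1 + t²) dt = ∞, then limsup_{x→∞} √x · min{ h(r)/r : 1 ≤ r ≤ x } = ∞. -/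
open Filter Set MeasureTheory

noncomputable section



lemma chordA {g : ℝ → ℝ} (hconv : ConvexOn ℝ (Set.Ici (0:ℝ)) g)
    {s₁ s₂ s : ℝ} (h0 : 0 ≤ s₁) (h1 : s₁ ≤ s) (h2 : s ≤ s₂) (h3 : s₁ < s₂) :
    g s ≤ g s₁ + (g s₂ - g s₁) * ((s - s₁)/(s₂ - s₁)) := by
  have hd : 0 < s₂ - s₁ := by linarith
  set μ := (s - s₁)/(s₂ - s₁) with hμ
  have hμ0 : 0 ≤ μ := div_nonneg (by linarith) hd.le
  have hμ1 : μ ≤ 1 := by rw [hμ, div_le_one hd]; linarith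
  have key := hconv.2 (Set.mem_Ici.2 h0) (Set.mem_Ici.2 (by linarith : (0:ℝ) ≤ s₂))
    (by linarith : (0:ℝ) ≤ 1 - μ) hμ0 (by ring)
  have hs : (1-μ) • s₁ + μ • s₂ = s := by
    simp only [smul_eq_mul]
    have : μ * (s₂ - s₁) = s - s₁ := by rw [hμ]; field_simp
    nlinarith [this]
  rw [hs] at key
  simp only [smul_eq_mul] at key
  nlinarith [key]

lemma ftcB {p q a K : ℝ} (hp : 0 < p) (hpq : p ≤ q) :
    ∫ t in p..q, (a + K * (Real.log t - Real.log p)) / t^2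
      = (a + K)/p - (a + K*(Real.log q - Real.log p) + K)/q := by
  have hderiv : ∀ t ∈ Set.uIcc p q,
      HasDerivAt (fun t => -((a + K*(Real.log t - Real.log p) + K)/t))
        ((a + K * (Real.log t - Real.log p)) / t^2) t := by
    intro t ht
    rw [Set.uIcc_of_le hpq] at ht
    have ht0 : 0 < t := lt_of_lt_of_le hp ht.1
    have h1 : HasDerivAt (fun t => a + K*(Real.log t - Real.log p) + K) (K * (1/t)) t := by
      have hl : HasDerivAt Real.log (1/t) t := by
        simpa [one_div] using Real.hasDerivAt_log ht0.ne'
      exact (((hl.sub_const (Real.log p)).const_mul K).const_add a).add_const K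
    have h2 : HasDerivAt (fun t : ℝ => t) 1 t := hasDerivAt_id t
    have := (h1.div h2 ht0.ne').neg
    have ht0' : t ≠ 0 := ht0.ne'
    have e : -((K * (1 / t) * t - (a + K * (Real.log t - Real.log p) + K) * 1) / t ^ 2)
        = (a + K * (Real.log t - Real.log p)) / t ^ 2 := by
      field_simp
      ring
    exact this.congr_deriv e
  have hne : ∀ x ∈ Set.uIcc p q, x ≠ 0 := by
    intro x hx
    rw [Set.uIcc_of_le hpq] at hx
    exact (lt_of_lt_of_le hp hx.1).ne'
  have hint : IntervalIntegrable (fun t => (a + K * (Real.log t - Real.log p)) / t^2)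
      MeasureTheory.volume p q := by
    apply ContinuousOn.intervalIntegrable
    apply ContinuousOn.div
    · exact continuousOn_const.add (continuousOn_const.mul
        ((Real.continuousOn_log.mono (fun x hx => hne x hx)).sub continuousOn_const))
    · exact continuousOn_pow 2
    · intro x hx
      exact pow_ne_zero 2 (hne x hx)
  rw [intervalIntegral.integral_eq_sub_of_hasDerivAt hderiv hint]
  simp only [sub_self, mul_zero, add_zero]
  ring

lemma pieceC (h : ℝ → ℝ)
    (hpos : ∀ t : ℝ, 1 ≤ t → 0 < h t)
    (hmono : MonotoneOn (fun s : ℝ => h (Real.exp s)) (Set.Ici (0 : ℝ)))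
    (hconv : ConvexOn ℝ (Set.Ici (0 : ℝ)) (fun s : ℝ => h (Real.exp s)))
    {p q : ℝ} (hp : 1 ≤ p) (hpq : p < q) :
    ∫⁻ t in Set.Ioc p q, ENNReal.ofReal (h t / (1 + t ^ 2))
      ≤ ENNReal.ofReal ((h p + (h q - h p)/(Real.log q - Real.log p)) / p) := by
  have p0 : (0:ℝ) < p := lt_of_lt_of_le one_pos hp
  have q0 : (0:ℝ) < q := lt_trans p0 hpq
  have lpq : Real.log p < Real.log q := Real.log_lt_log p0 hpq
  have lp0 : 0 ≤ Real.log p := Real.log_nonneg hp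
  have hpq' : h p ≤ h q := by
    have := hmono (Set.mem_Ici.2 lp0) (Set.mem_Ici.2 (le_trans lp0 lpq.le)) lpq.le
    simpa [Real.exp_log p0, Real.exp_log q0] using this
  set K := (h q - h p)/(Real.log q - Real.log p) with hK
  have K0 : 0 ≤ K := div_nonneg (by linarith) (by linarith)
  set φ : ℝ → ℝ := fun t => h p + K * (Real.log t - Real.log p) with hφ
  have hp0 : 0 < h p := hpos p hp
  have φ0 : ∀ t ∈ Set.Ioc p q, 0 ≤ φ t := by
    intro t ht
    have : Real.log p ≤ Real.log t := Real.log_le_log p0 ht.1.le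
    have : 0 ≤ K * (Real.log t - Real.log p) := mul_nonneg K0 (by linarith)
    simp only [hφ]; linarith
  have step1 : ∫⁻ t in Set.Ioc p q, ENNReal.ofReal (h t / (1 + t ^ 2))
      ≤ ∫⁻ t in Set.Ioc p q, ENNReal.ofReal (φ t / t ^ 2) := by
    apply MeasureTheory.setLIntegral_mono
    · apply ENNReal.measurable_ofReal.comp
      exact (measurable_const.add ((Real.measurable_log.sub measurable_const).const_mul K)).div
        ((measurable_id.pow_const 2))
    · intro t ht
      have t0 : (0:ℝ) < t := lt_trans p0 ht.1
      have ht1 : (1:ℝ) ≤ t := le_trans hp ht.1.le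
      have hle : h t ≤ φ t := by
        have hch := chordA hconv lp0 (Real.log_le_log p0 ht.1.le)
          (Real.log_le_log t0 ht.2) lpq
        simp only [Real.exp_log p0, Real.exp_log q0, Real.exp_log t0] at hch
        calc h t ≤ h p + (h q - h p) * ((Real.log t - Real.log p)/(Real.log q - Real.log p)) := hch
        _ = φ t := by simp only [hφ, hK]; ring
      apply ENNReal.ofReal_le_ofReal
      calc h t / (1 + t^2) ≤ φ t / (1 + t^2) := by gcongr
      _ ≤ φ t / t^2 := by
          apply div_le_div_of_nonneg_left (φ0 t ht) (by positivity) (by nlinarith)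
  have hcont : ContinuousOn (fun t => φ t / t^2) (Set.Icc p q) := by
    apply ContinuousOn.div
    · exact continuousOn_const.add (continuousOn_const.mul
        ((Real.continuousOn_log.mono (fun x hx => by
          simp only [Set.mem_compl_iff, Set.mem_singleton_iff]
          exact (lt_of_lt_of_le p0 hx.1).ne')).sub continuousOn_const))
    · exact continuousOn_pow 2
    · intro x hx
      exact pow_ne_zero 2 (lt_of_lt_of_le p0 hx.1).ne'
  have hInt : MeasureTheory.IntegrableOn (fun t => φ t / t^2) (Set.Ioc p q) := by
    exact (hcont.integrableOn_Icc).mono_set Set.Ioc_subset_Icc_self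
  have hae : 0 ≤ᵐ[MeasureTheory.volume.restrict (Set.Ioc p q)] (fun t => φ t / t^2) := by
    filter_upwards [MeasureTheory.ae_restrict_mem measurableSet_Ioc] with t ht
    exact div_nonneg (φ0 t ht) (by positivity)
  have step2 : ∫⁻ t in Set.Ioc p q, ENNReal.ofReal (φ t / t ^ 2)
      = ENNReal.ofReal (∫ t in Set.Ioc p q, φ t / t^2) :=
    (MeasureTheory.ofReal_integral_eq_lintegral_ofReal hInt hae).symm
  have step3 : (∫ t in Set.Ioc p q, φ t / t^2) ≤ (h p + K) / p := by
    rw [← intervalIntegral.integral_of_le hpq.le]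
    rw [show (fun t => φ t / t^2) = fun t => (h p + K * (Real.log t - Real.log p)) / t^2 from rfl]
    rw [ftcB p0 hpq.le]
    have h1 : 0 ≤ (h p + K*(Real.log q - Real.log p) + K)/q := by
      apply div_nonneg _ q0.le
      have : 0 ≤ K * (Real.log q - Real.log p) := mul_nonneg K0 (by linarith)
      linarith
    linarith
  calc ∫⁻ t in Set.Ioc p q, ENNReal.ofReal (h t / (1 + t ^ 2))
      ≤ ∫⁻ t in Set.Ioc p q, ENNReal.ofReal (φ t / t ^ 2) := step1
    _ = ENNReal.ofReal (∫ t in Set.Ioc p q, φ t / t^2) := step2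
    _ ≤ ENNReal.ofReal ((h p + K) / p) := ENNReal.ofReal_le_ofReal step3

lemma ineqD {B c d l l' : ℝ} (hB : 0 ≤ B) (hc : 0 ≤ c) (hd : 0 ≤ d)
    (hl : 100 + d ≤ l) (h1 : l + 1 ≤ l') (h2 : l' ≤ 2*l + d) :
    B * Real.exp (-(l/2)) + B*c*(Real.exp (l' - 2*l)/(l' - l))
      ≤ (B*7 + B*c*(12*Real.exp d + 7)) * (1/l - 1/l') := by
  have hl100 : (100:ℝ) ≤ l := by linarith
  have hp : (0:ℝ) < l := by linarith
  have hp' : (0:ℝ) < l' := by linarith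
  have hg1 : (1:ℝ) ≤ l' - l := by linarith
  have hfrac : 1/l - 1/l' = (l' - l)/(l*l') := by field_simp
  have hll' : l * l' ≤ 3*l^2 := by nlinarith
  have hkey1 : 1/(3*l^2) ≤ (l'-l)/(l*l') := by
    rw [div_le_div_iff₀ (by positivity) (by positivity)]
    nlinarith
  have hE : Real.exp (-(l/2)) ≤ 7/(3*l^2) := by
    rw [Real.exp_neg, inv_eq_one_div, div_le_div_iff₀ (Real.exp_pos _) (by positivity)]
    have key : l/6 ≤ Real.exp (l/6) := by linarith [Real.add_one_le_exp (l/6)]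
    have hcube : (l/6)^3 ≤ Real.exp (l/6)^3 := by
      apply pow_le_pow_left₀ (by positivity) key
    have hexp : Real.exp (l/6)^3 = Real.exp (l/2) := by
      rw [show Real.exp (l/6)^3 = Real.exp (l/6) * Real.exp (l/6) * Real.exp (l/6) by ring,
        ← Real.exp_add, ← Real.exp_add]
      ring_nf
    nlinarith [hcube, hexp]
  have term1 : Real.exp (-(l/2)) ≤ 7 * ((l'-l)/(l*l')) := by
    calc Real.exp (-(l/2)) ≤ 7/(3*l^2) := hE
    _ = 7 * (1/(3*l^2)) := by ring
    _ ≤ 7 * ((l'-l)/(l*l')) := by linarith [hkey1]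
  have term2 : Real.exp (l' - 2*l)/(l' - l) ≤ (12*Real.exp d + 7) * ((l'-l)/(l*l')) := by
    have hfp : 0 ≤ (l'-l)/(l*l') := by positivity
    rcases le_or_gt (l/2) (l'-l) with hcase | hcase
    · have e1 : Real.exp (l' - 2*l) ≤ Real.exp d := Real.exp_le_exp.2 (by linarith)
      have e2 : Real.exp (l' - 2*l)/(l'-l) ≤ Real.exp d/(l'-l) :=
        div_le_div_of_nonneg_right e1 (by linarith) |>.trans_eq rfl
      have e3 : Real.exp d/(l'-l) ≤ 12*Real.exp d * ((l'-l)/(l*l')) := by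
        rw [show 12*Real.exp d * ((l'-l)/(l*l')) = (12*Real.exp d*(l'-l))/(l*l') by ring,
          div_le_div_iff₀ (by linarith) (by positivity)]
        have h12 : l*l' ≤ 12*(l'-l)^2 := by nlinarith
        nlinarith [mul_le_mul_of_nonneg_left h12 (Real.exp_pos d).le]
      have : (0:ℝ) ≤ 7 * ((l'-l)/(l*l')) := by positivity
      nlinarith [e2, e3]
    · have e1 : Real.exp (l' - 2*l) ≤ Real.exp (-(l/2)) := Real.exp_le_exp.2 (by linarith)
      have e2 : Real.exp (l' - 2*l)/(l'-l) ≤ Real.exp (l' - 2*l) :=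
        div_le_self (Real.exp_pos _).le hg1
      have e3 : Real.exp (l' - 2*l)/(l'-l) ≤ 7*((l'-l)/(l*l')) := by
        calc Real.exp (l' - 2*l)/(l'-l) ≤ Real.exp (-(l/2)) := e2.trans e1
        _ ≤ 7/(3*l^2) := hE
        _ = 7 * (1/(3*l^2)) := by ring
        _ ≤ 7 * ((l'-l)/(l*l')) := by linarith [hkey1]
      nlinarith [Real.exp_pos d, e3]
  rw [hfrac]
  have t1 := mul_le_mul_of_nonneg_left term1 hB
  have t2 := mul_le_mul_of_nonneg_left term2 (mul_nonneg hB hc)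
  nlinarith [t1, t2]

set_option maxHeartbeats 3000000 in
/-- Let `h : [1,∞) → (0,∞)` be such that `s ↦ h(e^s)` is increasing and
convex on `[0,∞)`. If `∫_1^∞ h(t)/(1+t²) dt = ∞` (a Lebesgue lower integral of the
nonnegative integrand), then `limsup_{x→∞} √x ⬝ min { h(r)/r : 1 ≤ r ≤ x } = ∞`
(i.e. `√x ⬝ min { h(r)/r : 1 ≤ r ≤ x }`, the minimum over real `r ∈ [1, x]` realized as an
infimum, exceeds every bound frequently). -/
theorem theta_limsup_of_integral_divergence (h : ℝ → ℝ)
    (hpos : ∀ t : ℝ, 1 ≤ t → 0 < h t)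
    (hmono : MonotoneOn (fun s : ℝ => h (Real.exp s)) (Set.Ici (0 : ℝ)))
    (hconv : ConvexOn ℝ (Set.Ici (0 : ℝ)) (fun s : ℝ => h (Real.exp s)))
    (hint : ∫⁻ t in Set.Ioi (1 : ℝ), ENNReal.ofReal (h t / (1 + t ^ 2)) = ⊤) :
    ∀ A : ℝ, ∃ᶠ x : ℝ in Filter.atTop,
      A < Real.sqrt x * sInf ((fun r : ℝ => h r / r) '' Set.Icc 1 x) := by
  intro A
  by_contra hcon
  rw [Filter.not_frequently] at hcon
  simp only [not_lt] at hcon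
  obtain ⟨X₀, hX₀⟩ := Filter.eventually_atTop.mp hcon
  have h1pos : 0 < h 1 := hpos 1 le_rfl
  set B := 2 * max A 1 with hBdef
  have hB2 : (2:ℝ) ≤ B := by have := le_max_right A 1; linarith
  have hB0 : (0:ℝ) < B := by linarith
  have hAB : A < B := by have h1 := le_max_left A 1; have h2 := le_max_right A 1; linarith
  set c := h 1 / B with hcdef
  have hc0 : 0 < c := div_pos h1pos hB0
  set X₁ := max X₀ 1 with hX₁def
  have hX₁1 : (1:ℝ) ≤ X₁ := le_max_right _ _
  -- monotonicity of h on [1,∞)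
  have hmono' : ∀ a b : ℝ, 1 ≤ a → a ≤ b → h a ≤ h b := by
    intro a b ha hab
    have ha0 : (0:ℝ) < a := lt_of_lt_of_le one_pos ha
    have hb0 : (0:ℝ) < b := lt_of_lt_of_le ha0 hab
    have := hmono (Set.mem_Ici.2 (Real.log_nonneg ha))
      (Set.mem_Ici.2 (Real.log_nonneg (ha.trans hab)))
      (Real.log_le_log ha0 hab)
    simpa [Real.exp_log ha0, Real.exp_log hb0] using this
  -- extraction
  have ext : ∀ x : ℝ, ∃ r : ℝ, X₁ ≤ x →
      1 ≤ r ∧ r ≤ x ∧ c * Real.sqrt x ≤ r ∧ h r ≤ B * r / Real.sqrt x := by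
    intro x
    by_cases hx : X₁ ≤ x
    · have hx1 : (1:ℝ) ≤ x := hX₁1.trans hx
      have hsx : 0 < Real.sqrt x := Real.sqrt_pos.2 (by linarith)
      have hne : ((fun r : ℝ => h r / r) '' Set.Icc 1 x).Nonempty :=
        ⟨h 1 / 1, ⟨1, ⟨le_rfl, hx1⟩, rfl⟩⟩
      have hinf : Real.sqrt x * sInf ((fun r : ℝ => h r / r) '' Set.Icc 1 x) ≤ A :=
        hX₀ x (le_trans (le_max_left _ _) hx)
      have hinf2 : sInf ((fun r : ℝ => h r / r) '' Set.Icc 1 x) ≤ A / Real.sqrt x := by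
        rw [le_div_iff₀ hsx, mul_comm]; exact hinf
      have hlt : sInf ((fun r : ℝ => h r / r) '' Set.Icc 1 x) < B / Real.sqrt x :=
        lt_of_le_of_lt hinf2 (by gcongr)
      obtain ⟨y, ⟨r, hrmem, rfl⟩, hylt⟩ := exists_lt_of_csInf_lt hne hlt
      simp only at hylt
      have hr1 : (1:ℝ) ≤ r := hrmem.1
      have hr0 : (0:ℝ) < r := lt_of_lt_of_le one_pos hr1
      have hrb : h r < B * r / Real.sqrt x := by
        rw [lt_div_iff₀ hsx]
        rw [div_lt_div_iff₀ hr0 hsx] at hylt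
        linarith
      refine ⟨r, fun _ => ⟨hr1, hrmem.2, ?_, hrb.le⟩⟩
      -- c√x ≤ r
      have hh1r : h 1 ≤ h r := hmono' 1 r le_rfl hr1
      have : h 1 * Real.sqrt x < B * r := by
        rw [div_lt_div_iff₀ hr0 hsx] at hylt
        nlinarith [hh1r, hsx]
      rw [hcdef, div_mul_eq_mul_div, div_le_iff₀ hB0]
      nlinarith [this]
    · exact ⟨1, fun hx' => absurd hx' hx⟩
  choose w hw using ext
  set d := max (2*(1 - Real.log c)) 0 with hddef
  have hd0 : (0:ℝ) ≤ d := le_max_right _ _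
  have hdlog : 2*(1 - Real.log c) ≤ d := le_max_left _ _
  set Θ := 100 + d + max (Real.log (c * Real.sqrt X₁)) 0 with hΘdef
  have hΘ100d : 100 + d ≤ Θ := by
    have := le_max_right (Real.log (c * Real.sqrt X₁)) (0:ℝ); linarith
  have hΘcX : c * Real.sqrt X₁ ≤ Real.exp Θ := by
    have hpos' : (0:ℝ) < c * Real.sqrt X₁ := by
      have : (0:ℝ) < Real.sqrt X₁ := Real.sqrt_pos.2 (by linarith)
      positivity
    have h1 : Real.log (c*Real.sqrt X₁) ≤ Θ := by
      have := le_max_left (Real.log (c * Real.sqrt X₁)) (0:ℝ); linarith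
    calc c*Real.sqrt X₁ = Real.exp (Real.log (c*Real.sqrt X₁)) := (Real.exp_log hpos').symm
    _ ≤ Real.exp Θ := Real.exp_le_exp.2 h1
  set x₀ := max X₁ ((Real.exp Θ / c)^2) with hx₀def
  obtain ⟨xs, hxs0, hxsS⟩ : ∃ xs : ℕ → ℝ, xs 0 = x₀ ∧
      ∀ n, xs (n+1) = (Real.exp 1 * (w (xs n)) / c)^2 :=
    ⟨fun n => Nat.rec x₀ (fun _ xp => (Real.exp 1 * (w xp) / c)^2) n, rfl, fun n => rfl⟩
  set rs : ℕ → ℝ := fun n => w (xs n) with hrsdef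
  have he1 : (2:ℝ) ≤ Real.exp 1 := by linarith [Real.add_one_le_exp (1:ℝ)]
  -- invariant
  have inv : ∀ n, X₁ ≤ xs n ∧ Real.exp Θ ≤ rs n := by
    intro n
    induction n with
    | zero =>
      refine ⟨by rw [hxs0]; exact le_max_left _ _, ?_⟩
      have h1 := (hw x₀ (le_max_left _ _)).2.2.1
      have h2 : Real.exp Θ / c ≤ Real.sqrt x₀ := by
        calc Real.exp Θ / c = Real.sqrt ((Real.exp Θ / c)^2) :=
          (Real.sqrt_sq (by positivity)).symm
        _ ≤ Real.sqrt x₀ := Real.sqrt_le_sqrt (le_max_right _ _)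
      have h3 : Real.exp Θ = c * (Real.exp Θ / c) := by field_simp
      calc Real.exp Θ = c * (Real.exp Θ / c) := h3
      _ ≤ c * Real.sqrt x₀ := by nlinarith [h2, hc0]
      _ ≤ rs 0 := by rw [hrsdef]; simp only [hxs0]; exact h1
    | succ n ih =>
      have hrn1 : (1:ℝ) ≤ rs n := (hw (xs n) ih.1).1
      have hrnpos : (0:ℝ) < rs n := lt_of_lt_of_le one_pos hrn1
      have hXsq : Real.sqrt (xs (n+1)) = Real.exp 1 * rs n / c := by
        rw [hxsS n]
        exact Real.sqrt_sq (by positivity)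
      have hx1 : X₁ ≤ xs (n+1) := by
        have hstep : Real.sqrt X₁ ≤ Real.exp 1 * rs n / c := by
          have h4 : c * Real.sqrt X₁ ≤ Real.exp 1 * rs n := by
            calc c * Real.sqrt X₁ ≤ Real.exp Θ := hΘcX
            _ ≤ rs n := ih.2
            _ ≤ Real.exp 1 * rs n := by nlinarith [he1, hrnpos]
          rw [le_div_iff₀ hc0]; linarith
        calc X₁ = Real.sqrt X₁ ^ 2 := (Real.sq_sqrt (by linarith)).symm
        _ ≤ (Real.exp 1 * rs n / c)^2 := pow_le_pow_left₀ (Real.sqrt_nonneg _) hstep 2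
        _ = xs (n+1) := (hxsS n).symm
      refine ⟨hx1, ?_⟩
      have h1 := (hw (xs (n+1)) hx1).2.2.1
      rw [hXsq] at h1
      have h2 : c * (Real.exp 1 * rs n / c) = Real.exp 1 * rs n := by field_simp
      calc Real.exp Θ ≤ rs n := ih.2
      _ ≤ Real.exp 1 * rs n := by nlinarith [he1, hrnpos]
      _ = c * (Real.exp 1 * rs n / c) := h2.symm
      _ ≤ rs (n+1) := h1
  -- per-index facts
  have props : ∀ n, 1 ≤ rs n ∧ rs n ≤ xs n ∧ c * Real.sqrt (xs n) ≤ rs n ∧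
      h (rs n) ≤ B * rs n / Real.sqrt (xs n) := fun n => hw (xs n) (inv n).1
  have hXsq : ∀ n, Real.sqrt (xs (n+1)) = Real.exp 1 * rs n / c := by
    intro n
    rw [hxsS n]
    have := lt_of_lt_of_le one_pos ((hw (xs n) (inv n).1).1)
    exact Real.sqrt_sq (by positivity)
  have hstep : ∀ n, Real.exp 1 * rs n ≤ rs (n+1) := by
    intro n
    have h1 := (props (n+1)).2.2.1
    rw [hXsq n] at h1
    have h2 : c * (Real.exp 1 * rs n / c) = Real.exp 1 * rs n := by field_simp
    linarith [h1, h2.symm.le]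
  set L : ℕ → ℝ := fun n => Real.log (rs n) with hLdef
  have hrpos : ∀ n, (0:ℝ) < rs n := fun n => lt_of_lt_of_le one_pos (props n).1
  have hLΘ : ∀ n, Θ ≤ L n := by
    intro n
    have := Real.log_le_log (Real.exp_pos Θ) (inv n).2
    rwa [Real.log_exp] at this
  have hL100 : ∀ n, 100 + d ≤ L n := fun n => le_trans hΘ100d (hLΘ n)
  have hLpos : ∀ n, (0:ℝ) < L n := fun n => lt_of_lt_of_le (by linarith [hd0]) (hL100 n)
  have hLsucc : ∀ n, L n + 1 ≤ L (n+1) := by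
    intro n
    have h1 : Real.log (Real.exp 1 * rs n) ≤ L (n+1) :=
      Real.log_le_log (by have := hrpos n; positivity) (hstep n)
    rw [Real.log_mul (Real.exp_pos 1).ne' (hrpos n).ne', Real.log_exp] at h1
    linarith
  have hLlt : ∀ n, rs n < rs (n+1) := by
    intro n
    calc rs n < 2 * rs n := by linarith [hrpos n]
    _ ≤ Real.exp 1 * rs n := by nlinarith [he1, hrpos n]
    _ ≤ rs (n+1) := hstep n
  have hLup : ∀ n, L (n+1) ≤ 2 * L n + d := by
    intro n
    have h1 : rs (n+1) ≤ (Real.exp 1 * rs n / c)^2 := by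
      rw [← hxsS n]; exact (props (n+1)).2.1
    have h2 : L (n+1) ≤ Real.log ((Real.exp 1 * rs n / c)^2) :=
      Real.log_le_log (hrpos (n+1)) h1
    rw [Real.log_pow, Real.log_div (by have := hrpos n; positivity) hc0.ne',
      Real.log_mul (Real.exp_pos 1).ne' (hrpos n).ne', Real.log_exp] at h2
    have : L (n+1) ≤ 2 * (1 + L n - Real.log c) := by
      simpa using h2
    linarith [hdlog]
  set C₀ := B*7 + B*c*(12*Real.exp d + 7) with hC₀def
  -- the piece bound
  have piece : ∀ n, ∫⁻ t in Set.Ioc (rs n) (rs (n+1)), ENNReal.ofReal (h t/(1+t^2))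
      ≤ ENNReal.ofReal (C₀ * (1/L n - 1/L (n+1))) := by
    intro n
    have hp1 : (1:ℝ) ≤ rs n := (props n).1
    have hq := pieceC h hpos hmono hconv hp1 (hLlt n)
    refine le_trans hq (ENNReal.ofReal_le_ofReal ?_)
    -- real inequality
    set p := rs n
    set q := rs (n+1)
    have hp0 : (0:ℝ) < p := hrpos n
    have hq0 : (0:ℝ) < q := hrpos (n+1)
    have hpe : p = Real.exp (L n) := (Real.exp_log hp0).symm
    have hqe : q = Real.exp (L (n+1)) := (Real.exp_log hq0).symm
    have hΔpos : (0:ℝ) < L (n+1) - L n := by linarith [hLsucc n]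
    have hsqp : Real.sqrt p = Real.exp (L n / 2) := by
      rw [hpe, show Real.exp (L n) = (Real.exp (L n / 2))^2 by
        rw [sq, ← Real.exp_add]; ring_nf]
      exact Real.sqrt_sq (Real.exp_pos _).le
    -- A1 : h p / p ≤ B * exp(-(L n/2))
    have hA1 : h p / p ≤ B * Real.exp (-(L n / 2)) := by
      have s1 : h p / p ≤ B / Real.sqrt (xs n) := by
        have := (props n).2.2.2
        rw [div_le_div_iff₀ hp0 (Real.sqrt_pos.2 (by
          linarith [hX₁1, (inv n).1] : (0:ℝ) < xs n))]
        rw [div_eq_mul_inv] at this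
        have hsxn : (0:ℝ) < Real.sqrt (xs n) := Real.sqrt_pos.2 (by linarith [hX₁1, (inv n).1])
        calc h p * Real.sqrt (xs n) ≤ (B * p * (Real.sqrt (xs n))⁻¹) * Real.sqrt (xs n) := by
              nlinarith [this, hsxn]
        _ = B * p := by field_simp
      have s2 : B / Real.sqrt (xs n) ≤ B / Real.sqrt p :=
        div_le_div_of_nonneg_left hB0.le (Real.sqrt_pos.2 hp0)
          (Real.sqrt_le_sqrt (props n).2.1)
      have s3 : B / Real.sqrt p = B * Real.exp (-(L n / 2)) := by
        rw [hsqp, Real.exp_neg, div_eq_mul_inv]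
      linarith [s1, s2, s3.le, s3.ge]
    -- A2
    have hA2 : (h q - h p)/(Real.log q - Real.log p) / p
        ≤ B * c * (Real.exp (L (n+1) - 2 * L n) / (L (n+1) - L n)) := by
      have hlq : Real.log q = L (n+1) := rfl
      have hlp : Real.log p = L n := rfl
      rw [hlq, hlp]
      have hKle : (h q - h p)/(L (n+1) - L n) ≤ h q / (L (n+1) - L n) :=
        (div_le_div_iff_of_pos_right hΔpos).2 (by linarith [hpos p hp1])
      have hhq : h q ≤ B * c * q / p := by
        have t1 := (props (n+1)).2.2.2
        rw [hXsq n] at t1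
        have t2 : B * q / (Real.exp 1 * p / c) = B * c * q / (Real.exp 1 * p) := by
          field_simp
        have t3 : B * c * q / (Real.exp 1 * p) ≤ B * c * q / p :=
          div_le_div_of_nonneg_left (mul_nonneg (mul_nonneg hB0.le hc0.le) hq0.le)
            hp0 (by nlinarith [he1, hp0])
        calc h q ≤ B * q / (Real.exp 1 * p / c) := by
              convert t1 using 2
        _ = B * c * q / (Real.exp 1 * p) := t2
        _ ≤ B * c * q / p := t3
      have hfinal : h q / (L (n+1) - L n) / p ≤ B * c * (Real.exp (L (n+1) - 2 * L n) / (L (n+1) - L n)) := by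
        have hexp2 : Real.exp (L (n+1) - 2 * L n) = q / p^2 := by
          rw [hpe, hqe, Real.exp_sub, show (2:ℝ) * L n = L n + L n by ring, Real.exp_add, sq]
        rw [hexp2, div_div, div_le_iff₀ (mul_pos hΔpos hp0)]
        have expand : B * c * (q / p ^ 2 / (L (n+1) - L n)) * ((L (n+1) - L n) * p)
            = B * c * q / p := by field_simp
        rw [expand]
        exact hhq
      calc (h q - h p)/(L (n+1) - L n) / p ≤ h q / (L (n+1) - L n) / p := by
            gcongr
      _ ≤ B * c * (Real.exp (L (n+1) - 2 * L n) / (L (n+1) - L n)) := hfinal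
    have hD := ineqD hB0.le hc0.le hd0 (hL100 n) (hLsucc n) (hLup n)
    calc (h p + (h q - h p)/(Real.log q - Real.log p)) / p
        = h p / p + (h q - h p)/(Real.log q - Real.log p) / p := by ring
    _ ≤ B * Real.exp (-(L n / 2)) + B*c*(Real.exp (L (n+1) - 2*L n)/(L (n+1) - L n)) := by
        linarith [hA1, hA2]
    _ ≤ C₀ * (1/L n - 1/L (n+1)) := hD
  -- summability
  have hterm_nonneg : ∀ n, 0 ≤ C₀ * (1/L n - 1/L (n+1)) := by
    intro n
    have hC0aux : (0:ℝ) ≤ C₀ := by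
      rw [hC₀def]
      have h1 : (0:ℝ) ≤ B*c*(12*Real.exp d + 7) :=
        mul_nonneg (mul_nonneg hB0.le hc0.le) (by positivity)
      nlinarith [hB0]
    apply mul_nonneg hC0aux
    have := one_div_le_one_div_of_le (hLpos n) (by linarith [hLsucc n] : L n ≤ L (n+1))
    linarith
  have hsummable : Summable (fun n => C₀ * (1/L n - 1/L (n+1))) := by
    apply summable_of_sum_range_le (c := C₀ * (1/L 0)) hterm_nonneg
    intro n
    rw [← Finset.mul_sum, Finset.sum_range_sub' (fun i => 1 / L i)]
    have h1 : 0 ≤ 1 / L n := by have := hLpos n; positivity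
    have hC₀0 : (0:ℝ) ≤ C₀ := by
      rw [hC₀def]
      have h2 : (0:ℝ) ≤ B*c*(12*Real.exp d + 7) :=
        mul_nonneg (mul_nonneg hB0.le hc0.le) (by positivity)
      nlinarith [hB0]
    nlinarith [h1, hC₀0]
  -- tail bound
  have tail : ∫⁻ t in ⋃ n, Set.Ioc (rs n) (rs (n+1)), ENNReal.ofReal (h t/(1+t^2)) ≠ ⊤ := by
    have t1 : ∫⁻ t in ⋃ n, Set.Ioc (rs n) (rs (n+1)), ENNReal.ofReal (h t/(1+t^2))
        ≤ ∑' n, ∫⁻ t in Set.Ioc (rs n) (rs (n+1)), ENNReal.ofReal (h t/(1+t^2)) :=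
      lintegral_iUnion_le _ _
    have t2 : ∑' n, ∫⁻ t in Set.Ioc (rs n) (rs (n+1)), ENNReal.ofReal (h t/(1+t^2))
        ≤ ∑' n, ENNReal.ofReal (C₀ * (1/L n - 1/L (n+1))) := ENNReal.tsum_le_tsum piece
    have t3 : ∑' n, ENNReal.ofReal (C₀ * (1/L n - 1/L (n+1)))
        = ENNReal.ofReal (∑' n, C₀ * (1/L n - 1/L (n+1))) :=
      (ENNReal.ofReal_tsum_of_nonneg hterm_nonneg hsummable).symm
    apply ne_top_of_le_ne_top _ (t1.trans (t2.trans t3.le))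
    exact ENNReal.ofReal_ne_top
  -- head bound
  have head : ∫⁻ t in Set.Ioc 1 (rs 0), ENNReal.ofReal (h t/(1+t^2)) ≠ ⊤ := by
    have hb : ∫⁻ t in Set.Ioc 1 (rs 0), ENNReal.ofReal (h t/(1+t^2))
        ≤ ∫⁻ _ in Set.Ioc 1 (rs 0), ENNReal.ofReal (h (rs 0)) := by
      apply MeasureTheory.setLIntegral_mono measurable_const
      intro t ht
      apply ENNReal.ofReal_le_ofReal
      have ht1 : (1:ℝ) ≤ t := ht.1.le
      calc h t / (1 + t^2) ≤ h t / 1 := by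
            apply div_le_div_of_nonneg_left (hpos t ht1).le one_pos (by nlinarith)
      _ = h t := div_one _
      _ ≤ h (rs 0) := hmono' t (rs 0) ht1 ht.2
    rw [MeasureTheory.setLIntegral_const] at hb
    apply ne_top_of_le_ne_top _ hb
    exact (ENNReal.mul_lt_top ENNReal.ofReal_lt_top
      (measure_Ioc_lt_top)).ne
  -- cover
  have hgrow : ∀ n, rs 0 + n ≤ rs n := by
    intro n
    induction n with
    | zero => simp
    | succ n ih =>
      have := hstep n
      have h2 : rs n + 1 ≤ rs (n+1) := by nlinarith [he1, hrpos n, hstep n, (props n).1]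
      push_cast
      push_cast at ih
      linarith
  have cover : Set.Ioi (1:ℝ) ⊆ Set.Ioc 1 (rs 0) ∪ ⋃ n, Set.Ioc (rs n) (rs (n+1)) := by
    intro t ht
    simp only [Set.mem_Ioi] at ht
    by_cases htr : t ≤ rs 0
    · exact Or.inl ⟨ht, htr⟩
    · right
      push_neg at htr
      by_contra hnot
      simp only [Set.mem_iUnion, Set.mem_Ioc, not_exists, not_and] at hnot
      have hall : ∀ n, rs n < t := by
        intro n
        induction n with
        | zero => exact htr
        | succ n ih =>
          by_contra hle
          push_neg at hle
          exact absurd hle (hnot n ih)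
      obtain ⟨n, hn⟩ := exists_nat_ge t
      have := hgrow n
      have := hall n
      have := hrpos 0
      linarith
  -- final contradiction
  have final : ∫⁻ t in Set.Ioi (1:ℝ), ENNReal.ofReal (h t / (1 + t ^ 2)) ≠ ⊤ := by
    have c1 : ∫⁻ t in Set.Ioi (1:ℝ), ENNReal.ofReal (h t / (1 + t ^ 2))
        ≤ ∫⁻ t in Set.Ioc 1 (rs 0) ∪ ⋃ n, Set.Ioc (rs n) (rs (n+1)),
            ENNReal.ofReal (h t / (1 + t ^ 2)) := lintegral_mono_set cover
    have c2 := MeasureTheory.lintegral_union_le (μ := MeasureTheory.volume)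
      (fun t => ENNReal.ofReal (h t / (1 + t ^ 2)))
      (Set.Ioc 1 (rs 0)) (⋃ n, Set.Ioc (rs n) (rs (n+1)))
    apply ne_top_of_le_ne_top _ (c1.trans c2)
    exact ENNReal.add_ne_top.2 ⟨head, tail⟩
  exact final hint
end
end

section
/- Let f : S → ℂ be continuous with ‖f‖_S ≤ 1/2, let 0 < c < 1, let (n_k) be a strictly increasing sequence of positive integers, and let p_{n_k} be trigonometric polynomials of degree at most n_k with ‖f − p_{n_k}‖_S ≤ c^{n_k} and ‖p_{n_k}‖_S ≤ 1. Define v_k(z, w) = (1/n_k) log|w − p_{n_k}(z)| on (ℂ∖{0}) × ℂ and v = sup_k v_k. Then: (i) v_k(z, w) ≤ max{ |log|z||, (1/n_k) log|w| } + (log 2)/n_k for all (z, w) ∈ (ℂ∖{0}) × ℂ; (ii) v(z, f(z)) ≤ log c for every z ∈ S; and (iii) v(z, w) ≥ 0 for every z ∈ S and every w ≠ f(z). -/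
open Complex Filter Set

noncomputable section

lemma maxmod (g : ℂ → ℂ) (hg : Differentiable ℂ g)
    (h : ∀ z : ℂ, ‖z‖ = 1 → ‖g z‖ ≤ 1) : ∀ z : ℂ, ‖z‖ ≤ 1 → ‖g z‖ ≤ 1 := by
  intro z hz
  have hcl : z ∈ closure (Metric.ball (0:ℂ) 1) := by
    rw [closure_ball (0:ℂ) one_ne_zero]
    simpa [Metric.mem_closedBall, dist_eq_norm] using hz
  refine Complex.norm_le_of_forall_mem_frontier_norm_le Metric.isBounded_ball
    hg.diffContOnCl ?_ hcl
  intro w hw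
  rw [frontier_ball (0:ℂ) one_ne_zero, mem_sphere_iff_norm, sub_zero] at hw
  exact h w hw

lemma trig_bound (n : ℕ) (co : ℤ → ℂ) (p : ℂ → ℂ)
    (hp : ∀ z : ℂ, z ≠ 0 → p z = ∑ m ∈ Finset.Icc (-(n:ℤ)) (n:ℤ), co m * z ^ m)
    (hb : ∀ z : ℂ, ‖z‖ = 1 → ‖p z‖ ≤ 1) :
    ∀ z : ℂ, z ≠ 0 → ‖p z‖ ≤ (max ‖z‖ ‖z‖⁻¹) ^ n := by
  set q : ℂ → ℂ := fun z => ∑ m ∈ Finset.Icc (-(n:ℤ)) (n:ℤ), co m * z ^ (m + n).toNat with hq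
  set r : ℂ → ℂ := fun z => ∑ m ∈ Finset.Icc (-(n:ℤ)) (n:ℤ), co m * z ^ ((n:ℤ) - m).toNat with hr
  have hqd : Differentiable ℂ q := by
    apply Differentiable.fun_sum
    intro m _
    exact (differentiable_pow _).const_mul _
  have hrd : Differentiable ℂ r := by
    apply Differentiable.fun_sum
    intro m _
    exact (differentiable_pow _).const_mul _
  have hqz : ∀ z : ℂ, z ≠ 0 → q z = z ^ n * p z := by
    intro z hz
    rw [hp z hz, Finset.mul_sum]
    refine Finset.sum_congr rfl fun m hm => ?_
    rw [Finset.mem_Icc] at hm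
    have h1 : ((m + n).toNat : ℤ) = m + n := Int.toNat_of_nonneg (by omega)
    rw [← zpow_natCast z (m + n).toNat, h1, ← zpow_natCast z n, mul_comm (z ^ (n:ℤ)),
      mul_assoc, ← zpow_add₀ hz]
  have hrz : ∀ z : ℂ, z ≠ 0 → r z = z ^ n * p z⁻¹ := by
    intro z hz
    rw [hp z⁻¹ (inv_ne_zero hz), Finset.mul_sum]
    refine Finset.sum_congr rfl fun m hm => ?_
    rw [Finset.mem_Icc] at hm
    have h1 : (((n:ℤ) - m).toNat : ℤ) = n - m := Int.toNat_of_nonneg (by omega)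
    rw [← zpow_natCast z ((n:ℤ) - m).toNat, h1, ← zpow_natCast z n, mul_comm (z ^ (n:ℤ)),
      mul_assoc]
    congr 1
    rw [inv_zpow, ← zpow_neg, ← zpow_add₀ hz, neg_add_eq_sub]
  have hq1 : ∀ z : ℂ, ‖z‖ ≤ 1 → ‖q z‖ ≤ 1 := by
    refine maxmod q hqd fun z hz => ?_
    have hz0 : z ≠ 0 := by intro h; rw [h] at hz; simp at hz
    rw [hqz z hz0, norm_mul, norm_pow, hz, one_pow, one_mul]
    exact hb z hz
  have hr1 : ∀ z : ℂ, ‖z‖ ≤ 1 → ‖r z‖ ≤ 1 := by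
    refine maxmod r hrd fun z hz => ?_
    have hz0 : z ≠ 0 := by intro h; rw [h] at hz; simp at hz
    rw [hrz z hz0, norm_mul, norm_pow, hz, one_pow, one_mul]
    exact hb z⁻¹ (by rw [norm_inv, hz]; norm_num)
  intro z hz
  have hz' : ‖z‖ > 0 := norm_pos_iff.mpr hz
  rcases le_total ‖z‖ 1 with h1 | h1
  · have := hq1 z h1
    rw [hqz z hz, norm_mul, norm_pow] at this
    have h2 : ‖p z‖ ≤ (‖z‖⁻¹) ^ n := by
      rw [inv_pow]
      calc ‖p z‖ = (‖z‖ ^ n)⁻¹ * (‖z‖ ^ n * ‖p z‖) :=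
            (inv_mul_cancel_left₀ (by positivity) _).symm
        _ ≤ (‖z‖ ^ n)⁻¹ * 1 := mul_le_mul_of_nonneg_left this (by positivity)
        _ = (‖z‖ ^ n)⁻¹ := mul_one _
    exact h2.trans (pow_le_pow_left₀ (by positivity) (le_max_right _ _) n)
  · have hinv : ‖z⁻¹‖ ≤ 1 := by
      rw [norm_inv]
      exact inv_le_one_of_one_le₀ h1
    have := hr1 z⁻¹ hinv
    rw [hrz z⁻¹ (inv_ne_zero hz), inv_inv, norm_mul, norm_pow, norm_inv] at this
    have h2 : ‖p z‖ ≤ ‖z‖ ^ n := by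
      rw [inv_pow] at this
      calc ‖p z‖ = ‖z‖ ^ n * ((‖z‖ ^ n)⁻¹ * ‖p z‖) :=
            (mul_inv_cancel_left₀ (by positivity) _).symm
        _ ≤ ‖z‖ ^ n * 1 := mul_le_mul_of_nonneg_left this (by positivity)
        _ = ‖z‖ ^ n := mul_one _
    exact h2.trans (pow_le_pow_left₀ (by positivity) (le_max_left _ _) n)

/-- Let `f : S → ℂ` be continuous with `‖f‖_S ≤ 1/2`, `0 < c < 1`,
`(n_k)` a strictly increasing sequence of positive integers and `p_{n_k}` trigonometric
polynomials of degree at most `n_k` with `‖f - p_{n_k}‖_S ≤ c^{n_k}` and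
`‖p_{n_k}‖_S ≤ 1`. With `v_k(z, w) = (1/n_k) log |w - p_{n_k}(z)|` (an `EReal`-valued
function, equal to `-∞` when `w = p_{n_k}(z)`) and `v = sup_k v_k`, one has:
(i) `v_k(z, w) ≤ max {|log|z||, (1/n_k) log|w|} + (log 2)/n_k` on `(ℂ∖{0}) × ℂ`;
(ii) `v(z, f z) ≤ log c` for `z ∈ S`; and
(iii) `v(z, w) ≥ 0` for `z ∈ S` and `w ≠ f z`. -/
theorem bernstein_sup_function_properties (f : ℂ → ℂ)
    (hf : ContinuousOn f (Metric.sphere (0:ℂ) 1))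
    (hfb : ∀ z : ℂ, ‖z‖ = 1 → ‖f z‖ ≤ 1 / 2)
    (c : ℝ) (hc0 : 0 < c) (hc1 : c < 1)
    (nk : ℕ → ℕ) (hmono : StrictMono nk) (hpos : ∀ k, 0 < nk k)
    (p : ℕ → ℂ → ℂ)
    (hdeg : ∀ k, ∃ co : ℤ → ℂ, ∀ z : ℂ, z ≠ 0 →
      p k z = ∑ m ∈ Finset.Icc (-(nk k : ℤ)) ((nk k : ℤ)), co m * z ^ m)
    (happrox : ∀ k, ∀ z : ℂ, ‖z‖ = 1 → ‖f z - p k z‖ ≤ c ^ nk k)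
    (hbdd : ∀ k, ∀ z : ℂ, ‖z‖ = 1 → ‖p k z‖ ≤ 1)
    (v' : ℕ → ℂ × ℂ → EReal)
    (hv' : ∀ k q, v' k q = if q.2 = p k q.1 then (⊥ : EReal)
      else (((nk k : ℝ)⁻¹ * Real.log ‖q.2 - p k q.1‖ : ℝ) : EReal))
    (v : ℂ × ℂ → EReal) (hv : ∀ q, v q = ⨆ k, v' k q) :
    (∀ k, ∀ z w : ℂ, z ≠ 0 →
      v' k (z, w) ≤
        ((max |Real.log ‖z‖| ((nk k : ℝ)⁻¹ * Real.log ‖w‖) +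
          Real.log 2 / (nk k : ℝ) : ℝ) : EReal)) ∧
    (∀ z : ℂ, ‖z‖ = 1 → v (z, f z) ≤ ((Real.log c : ℝ) : EReal)) ∧
    (∀ z : ℂ, ‖z‖ = 1 → ∀ w : ℂ, w ≠ f z → (0 : EReal) ≤ v (z, w)) := by
  refine ⟨?_, ?_, ?_⟩
  · -- (i)
    intro k z w hz
    rw [hv']
    dsimp only
    split_ifs with h
    · exact bot_le
    rw [EReal.coe_le_coe_iff]
    have hn : (0:ℝ) < (nk k : ℝ) := by exact_mod_cast hpos k
    obtain ⟨co, hco⟩ := hdeg k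
    have hb := trig_bound (nk k) co (p k) hco (hbdd k) z hz
    set M : ℝ := max ‖z‖ ‖z‖⁻¹ with hMdef
    have hz' : (0:ℝ) < ‖z‖ := norm_pos_iff.mpr hz
    have hM1 : (1:ℝ) ≤ M := by
      rcases le_total 1 ‖z‖ with h1 | h1
      · exact h1.trans (le_max_left _ _)
      · have hinv1 : (1:ℝ) ≤ ‖z‖⁻¹ := by
          nlinarith [inv_mul_cancel₀ hz'.ne', inv_nonneg.mpr hz'.le]
        exact hinv1.trans (le_max_right _ _)
    have hlogM : Real.log M = |Real.log ‖z‖| := by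
      rcases le_total 1 ‖z‖ with h1 | h1
      · have : M = ‖z‖ := max_eq_left ((inv_le_one_of_one_le₀ h1).trans h1)
        rw [this]
        exact (_root_.abs_of_nonneg (Real.log_nonneg h1)).symm
      · have hinv1 : (1:ℝ) ≤ ‖z‖⁻¹ := by
          nlinarith [inv_mul_cancel₀ hz'.ne', inv_nonneg.mpr hz'.le]
        have : M = ‖z‖⁻¹ := max_eq_right (h1.trans hinv1)
        rw [this, Real.log_inv]
        exact (_root_.abs_of_nonpos (Real.log_nonpos (norm_nonneg z) h1)).symm
    have h0 : (0:ℝ) < ‖w - p k z‖ := norm_pos_iff.mpr (sub_ne_zero.mpr h)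
    have hMn : (0:ℝ) < M ^ nk k := by positivity
    have hmaxpos : (0:ℝ) < max ‖w‖ (M ^ nk k) := lt_of_lt_of_le hMn (le_max_right _ _)
    have key : Real.log ‖w - p k z‖ ≤
        Real.log 2 + max (Real.log ‖w‖) ((nk k : ℝ) * |Real.log ‖z‖|) := by
      have step1 : ‖w - p k z‖ ≤ ‖w‖ + M ^ nk k :=
        (norm_sub_le _ _).trans (add_le_add_right hb _)
      have step2 : ‖w‖ + M ^ nk k ≤ 2 * max ‖w‖ (M ^ nk k) := by
        rw [two_mul]; exact add_le_add (le_max_left _ _) (le_max_right _ _)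
      calc Real.log ‖w - p k z‖ ≤ Real.log (2 * max ‖w‖ (M ^ nk k)) :=
            Real.log_le_log h0 (step1.trans step2)
        _ = Real.log 2 + Real.log (max ‖w‖ (M ^ nk k)) :=
            Real.log_mul two_ne_zero (ne_of_gt hmaxpos)
        _ ≤ Real.log 2 + max (Real.log ‖w‖) ((nk k : ℝ) * |Real.log ‖z‖|) := by
            refine add_le_add_right ?_ _
            rcases max_cases ‖w‖ (M ^ nk k) with ⟨h1, _⟩ | ⟨h1, _⟩ <;> rw [h1]
            · exact le_max_left _ _
            · rw [Real.log_pow, hlogM]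
              exact le_max_right _ _
    have h5 : (nk k : ℝ)⁻¹ * max (Real.log ‖w‖) ((nk k : ℝ) * |Real.log ‖z‖|) ≤
        max |Real.log ‖z‖| ((nk k : ℝ)⁻¹ * Real.log ‖w‖) := by
      rcases max_cases (Real.log ‖w‖) ((nk k : ℝ) * |Real.log ‖z‖|) with ⟨h1, _⟩ | ⟨h1, _⟩ <;>
        rw [h1]
      · exact le_max_right _ _
      · rw [inv_mul_cancel_left₀ hn.ne']
        exact le_max_left _ _
    calc (nk k : ℝ)⁻¹ * Real.log ‖w - p k z‖
        ≤ (nk k : ℝ)⁻¹ * (Real.log 2 + max (Real.log ‖w‖) ((nk k : ℝ) * |Real.log ‖z‖|)) :=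
          mul_le_mul_of_nonneg_left key (by positivity)
      _ = (nk k : ℝ)⁻¹ * max (Real.log ‖w‖) ((nk k : ℝ) * |Real.log ‖z‖|)
            + Real.log 2 / (nk k : ℝ) := by ring
      _ ≤ max |Real.log ‖z‖| ((nk k : ℝ)⁻¹ * Real.log ‖w‖) + Real.log 2 / (nk k : ℝ) :=
          add_le_add_left h5 _
  · -- (ii)
    intro z hz1
    rw [hv]
    refine iSup_le fun k => ?_
    rw [hv']
    dsimp only
    split_ifs with h
    · exact bot_le
    rw [EReal.coe_le_coe_iff]
    have hn : (0:ℝ) < (nk k : ℝ) := by exact_mod_cast hpos k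
    have h0 : (0:ℝ) < ‖f z - p k z‖ := norm_pos_iff.mpr (sub_ne_zero.mpr h)
    have h1 : Real.log ‖f z - p k z‖ ≤ (nk k : ℝ) * Real.log c := by
      rw [← Real.log_pow]
      exact Real.log_le_log h0 (happrox k z hz1)
    calc (nk k : ℝ)⁻¹ * Real.log ‖f z - p k z‖
        ≤ (nk k : ℝ)⁻¹ * ((nk k : ℝ) * Real.log c) :=
          mul_le_mul_of_nonneg_left h1 (by positivity)
      _ = Real.log c := inv_mul_cancel_left₀ hn.ne' _
  · -- (iii)
    intro z hz1 w hw
    rw [hv]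
    by_contra hcon
    rw [not_le] at hcon
    obtain ⟨r, hr1, hr2⟩ := EReal.exists_between_coe_real hcon
    have hr0 : r < 0 := by exact_mod_cast hr2
    set d : ℝ := ‖w - f z‖ with hddef
    have hd : (0:ℝ) < d := norm_pos_iff.mpr (sub_ne_zero.mpr hw)
    set L : ℝ := min (Real.log (d / 2)) 0 with hLdef
    have hL : L ≤ 0 := min_le_right _ _
    have hnk : Tendsto (fun k => (nk k : ℝ)) atTop atTop :=
      tendsto_natCast_atTop_atTop.comp hmono.tendsto_atTop
    have h1 : Tendsto (fun k => L / (nk k : ℝ)) atTop (nhds 0) :=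
      Tendsto.div_atTop tendsto_const_nhds hnk
    have h2 : Tendsto (fun k => c ^ nk k) atTop (nhds 0) :=
      (tendsto_pow_atTop_nhds_zero_of_lt_one hc0.le hc1).comp hmono.tendsto_atTop
    obtain ⟨k, hk1, hk2⟩ := ((h1.eventually (eventually_gt_nhds hr0)).and
      (h2.eventually (eventually_lt_nhds (by positivity : (0:ℝ) < d / 2)))).exists
    have hn : (0:ℝ) < (nk k : ℝ) := by exact_mod_cast hpos k
    have hnorm : d / 2 ≤ ‖w - p k z‖ := by
      have h3 : d ≤ ‖w - p k z‖ + ‖f z - p k z‖ := by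
        have ht := dist_triangle w (p k z) (f z)
        rw [dist_eq_norm, dist_eq_norm, dist_eq_norm,
          norm_sub_rev (p k z) (f z)] at ht
        exact ht
      have h4 : ‖f z - p k z‖ ≤ c ^ nk k := happrox k z hz1
      linarith [hk2.le]
    have hne : w ≠ p k z := by
      intro he
      rw [he, sub_self, norm_zero] at hnorm
      linarith
    have hreal : r < (nk k : ℝ)⁻¹ * Real.log ‖w - p k z‖ := by
      have s1 : L / (nk k : ℝ) ≤ Real.log (d / 2) / (nk k : ℝ) :=
        by gcongr; exact min_le_left _ _
      have s2 : Real.log (d / 2) ≤ Real.log ‖w - p k z‖ :=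
        Real.log_le_log (by positivity) hnorm
      have s3 : Real.log (d / 2) / (nk k : ℝ) ≤ Real.log ‖w - p k z‖ / (nk k : ℝ) :=
        by gcongr
      rw [inv_mul_eq_div]
      linarith
    have hfinal : (r : EReal) < v' k (z, w) := by
      rw [hv']
      dsimp only
      rw [if_neg hne]
      exact_mod_cast hreal
    exact absurd (hfinal.trans_le (le_iSup (fun k => v' k (z, w)) k)) (not_lt_of_gt hr1)
end
end
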